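/- arXiv:1702.07786 — 6 statements merged into one kernel-verified Lean document; each statement's English description precedes it below -/
import Mathlib

section
/- (Fatou's lemma for weakly converging finite measures, liminf version; Lemma 2.2, inequality (2.1).) Let S be a metric space, let (μ_n) be a sequence of finite Borel measures on S converging weakly to a finite Borel measure μ, and let (φ_n) be a sequence of Borel measurable, nonnegative, uniformly bounded functions on S. Then the function z ↦ liminf_{n→∞, w→z} φ_n(w) is lower semicontinuous (hence Borel measurable) and ∫_S (liminf_{n→∞, w→z} φ_n(w)) μ(dz) ≤ liminf_{n→∞} ∫_S φ_n(z) μ_n(dz). -/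
open Filter MeasureTheory Set
open scoped Topology NNReal

lemma aux_integrable {S : Type*} [MeasurableSpace S] (ν : Measure S) [IsFiniteMeasure ν]
    {f : S → ℝ} {C : ℝ} (hf : Measurable f) (hb : ∀ z, |f z| ≤ C) : Integrable f ν := by
  refine (integrable_const C).mono' hf.aestronglyMeasurable (Eventually.of_forall fun z => ?_)
  simpa [Real.norm_eq_abs] using hb z

/-- **Fatou's lemma for weakly converging finite measures (liminf version).**
If finite Borel measures `μn` on a metric space `S` converge weakly to a finite Borel
measure `μ`, and `φ n` are Borel measurable, nonnegative, uniformly bounded functions,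
then the function `z ↦ liminf_{n→∞, w→z} φ n w` is lower semicontinuous and
`∫ liminf dμ ≤ liminf ∫ φ n dμn`. -/
theorem fatou_weak_convergence_liminf
    {S : Type*} [MetricSpace S] [MeasurableSpace S] [BorelSpace S]
    (μ : Measure S) (μn : ℕ → Measure S)
    (hμ : IsFiniteMeasure μ) (hμn : ∀ n, IsFiniteMeasure (μn n))
    (hweak : ∀ g : S → ℝ, Continuous g → (∃ C : ℝ, ∀ z, |g z| ≤ C) →
      Tendsto (fun n => ∫ z, g z ∂(μn n)) atTop (𝓝 (∫ z, g z ∂μ)))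
    (φ : ℕ → S → ℝ) (hmeas : ∀ n, Measurable (φ n))
    (hnonneg : ∀ n z, 0 ≤ φ n z) (C : ℝ) (hbound : ∀ n z, φ n z ≤ C) :
    LowerSemicontinuous
      (fun z => liminf (fun p : ℕ × S => φ p.1 p.2) (atTop ×ˢ 𝓝 z)) ∧
    (∫ z, liminf (fun p : ℕ × S => φ p.1 p.2) (atTop ×ˢ 𝓝 z) ∂μ) ≤
      liminf (fun n => ∫ z, φ n z ∂(μn n)) atTop := by
  rcases isEmpty_or_nonempty S with hS | hS
  · constructor
    · intro z; exact isEmptyElim z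
    · have h1 : μ = 0 := Measure.eq_zero_of_isEmpty μ
      have h2 : ∀ n, μn n = 0 := fun n => Measure.eq_zero_of_isEmpty (μn n)
      simp only [h1, h2, integral_zero_measure]
      simpa using (liminf_const (0 : ℝ) (f := (atTop : Filter ℕ))).ge
  · obtain ⟨z₀⟩ := id hS
    have hC0 : (0 : ℝ) ≤ C := le_trans (hnonneg 0 z₀) (hbound 0 z₀)
    -- the Lipschitz regularizations
    set h : ℕ → S → ℝ := fun k z => ⨅ p : ℕ × S, (φ (p.1 + k) p.2 + k * dist p.2 z) with hh
    have hbdd : ∀ k z, BddBelow (Set.range fun p : ℕ × S => φ (p.1 + k) p.2 + k * dist p.2 z) := by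
      rintro k z
      refine ⟨0, ?_⟩
      rintro x ⟨p, rfl⟩
      exact add_nonneg (hnonneg _ _) (mul_nonneg (Nat.cast_nonneg k) dist_nonneg)
    have h_nonneg : ∀ k z, 0 ≤ h k z := fun k z =>
      le_ciInf fun p => add_nonneg (hnonneg _ _) (mul_nonneg (Nat.cast_nonneg k) dist_nonneg)
    have h_le : ∀ k m z, k ≤ m → h k z ≤ φ m z := by
      intro k m z hk
      have := ciInf_le (hbdd k z) ((m - k, z) : ℕ × S)
      simpa [Nat.sub_add_cancel hk] using this
    have h_le_C : ∀ k z, h k z ≤ C := fun k z => (h_le k k z le_rfl).trans (hbound k z)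
    have h_abs : ∀ k z, |h k z| ≤ C := fun k z =>
      abs_le.2 ⟨le_trans (by linarith) (h_nonneg k z), h_le_C k z⟩
    have key : ∀ (k : ℕ) (x y : S), h k x ≤ h k y + (k : ℝ) * dist x y := by
      intro k x y
      rw [← sub_le_iff_le_add]
      refine le_ciInf fun p => ?_
      have h1 := ciInf_le (hbdd k x) p
      have h2 : dist p.2 x ≤ dist p.2 y + dist y x := dist_triangle _ _ _
      have h3 : (k : ℝ) * dist p.2 x ≤ (k : ℝ) * dist p.2 y + (k : ℝ) * dist x y := by
        have := mul_le_mul_of_nonneg_left h2 (by positivity : (0:ℝ) ≤ (k:ℝ))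
        rw [mul_add, dist_comm y x] at this
        exact this
      linarith
    have h_lip : ∀ k : ℕ, LipschitzWith (k : ℝ≥0) (h k) := by
      intro k
      apply LipschitzWith.of_dist_le_mul
      intro x y
      rw [Real.dist_eq]
      push_cast
      rw [abs_sub_le_iff]
      constructor
      · linarith [key k x y]
      · have := key k y x
        rw [dist_comm y x] at this
        linarith
    have h_cont : ∀ k, Continuous (h k) := fun k => (h_lip k).continuous
    have h_mono : ∀ z, Monotone fun k => h k z := by
      intro z k l hkl
      refine le_ciInf fun p => ?_
      have h1 := ciInf_le (hbdd k z) ((p.1 + (l - k), p.2) : ℕ × S)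
      have he : p.1 + (l - k) + k = p.1 + l := by omega
      rw [he] at h1
      refine h1.trans (add_le_add le_rfl ?_)
      exact mul_le_mul_of_nonneg_right (Nat.cast_le.2 hkl) dist_nonneg
    have hbddS : ∀ z, BddAbove (Set.range fun k => h k z) := by
      intro z; exact ⟨C, by rintro x ⟨k, rfl⟩; exact h_le_C k z⟩
    -- identification of the liminf with the sup of regularizations
    have hψ : ∀ z, liminf (fun p : ℕ × S => φ p.1 p.2) (atTop ×ˢ 𝓝 z) = ⨆ k, h k z := by
      intro z
      refine le_antisymm ?_ ?_
      · rw [liminf_eq]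
        refine csSup_le ⟨0, show ∀ᶠ p : ℕ × S in atTop ×ˢ 𝓝 z, (0:ℝ) ≤ φ p.1 p.2 from
          Eventually.of_forall fun p => hnonneg p.1 p.2⟩ ?_
        intro b hb
        have hb' : ∀ᶠ p : ℕ × S in atTop ×ˢ 𝓝 z, b ≤ φ p.1 p.2 := hb
        rw [eventually_prod_iff] at hb'
        rename' hb' => hb
        obtain ⟨pa, hpa, pb, hpb, himp⟩ := hb
        obtain ⟨n₀, hn₀⟩ := eventually_atTop.1 hpa
        obtain ⟨ε, hε, hball⟩ := Metric.eventually_nhds_iff.1 hpb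
        obtain ⟨k₁, hk₁⟩ := exists_nat_ge (b / ε)
        set k := max n₀ k₁ with hk
        have hkε : b ≤ (k : ℝ) * ε := by
          have h5 : b / ε ≤ (k : ℝ) := hk₁.trans (by exact_mod_cast le_max_right n₀ k₁)
          calc b = (b / ε) * ε := by field_simp
          _ ≤ (k : ℝ) * ε := mul_le_mul_of_nonneg_right h5 hε.le
        have hbk : b ≤ h k z := by
          refine le_ciInf fun p => ?_
          rcases lt_or_ge (dist p.2 z) ε with hd | hd
          · have h6 : b ≤ φ (p.1 + k) p.2 :=
              himp (hn₀ _ (le_trans (le_max_left n₀ k₁) (Nat.le_add_left k p.1))) (hball hd)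
            exact h6.trans (le_add_of_nonneg_right
              (mul_nonneg (Nat.cast_nonneg k) dist_nonneg))
          · calc b ≤ (k : ℝ) * ε := hkε
            _ ≤ (k : ℝ) * dist p.2 z := mul_le_mul_of_nonneg_left hd (Nat.cast_nonneg k)
            _ ≤ φ (p.1 + k) p.2 + (k : ℝ) * dist p.2 z :=
                le_add_of_nonneg_left (hnonneg _ _)
        exact hbk.trans (le_ciSup (hbddS z) k)
      · refine ciSup_le fun k => ?_
        refine le_of_forall_pos_le_add fun ε hε => ?_
        have hco : IsCoboundedUnder (· ≥ ·) (atTop ×ˢ 𝓝 z)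
            (fun p : ℕ × S => φ p.1 p.2) := by
          exact IsBoundedUnder.isCoboundedUnder_ge
            (isBoundedUnder_of ⟨C, fun p => hbound p.1 p.2⟩)
        have hev : ∀ᶠ p : ℕ × S in atTop ×ˢ 𝓝 z, h k z - ε ≤ φ p.1 p.2 := by
          set δ : ℝ := ε / (k + 1) with hδ
          have hδpos : 0 < δ := by positivity
          have h1 : ∀ᶠ m : ℕ in atTop, k ≤ m := eventually_ge_atTop k
          have h2 : ∀ᶠ w in 𝓝 z, dist w z < δ := by
            have := Metric.ball_mem_nhds z hδpos
            exact eventually_iff.2 (by simpa [Metric.ball] using this)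
          filter_upwards [h1.prod_mk h2] with p hp
          obtain ⟨hp1, hp2⟩ := hp
          have hk1 := ciInf_le (hbdd k z) ((p.1 - k, p.2) : ℕ × S)
          rw [Nat.sub_add_cancel hp1] at hk1
          have h7 : (k : ℝ) * dist p.2 z ≤ ε := by
            have h3 : (k : ℝ) * dist p.2 z ≤ (k : ℝ) * δ :=
              mul_le_mul_of_nonneg_left hp2.le (Nat.cast_nonneg k)
            have h4 : (k : ℝ) * δ ≤ ε := by
              rw [hδ]
              have h8 : (k : ℝ) ≤ (k : ℝ) + 1 := by linarith
              calc (k : ℝ) * (ε / (k+1)) ≤ ((k : ℝ) + 1) * (ε / (k+1)) :=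
                    mul_le_mul_of_nonneg_right h8 (by positivity)
                _ = ε := by field_simp
            linarith
          linarith
        have := le_liminf_of_le hco hev
        linarith [this]
    -- lower semicontinuity
    have hLSC : LowerSemicontinuous
        (fun z => liminf (fun p : ℕ × S => φ p.1 p.2) (atTop ×ˢ 𝓝 z)) := by
      intro z y hy
      simp only [hψ] at hy
      obtain ⟨k, hk⟩ := (lt_ciSup_iff (hbddS z)).1 hy
      filter_upwards [((h_cont k).tendsto z).eventually (eventually_gt_nhds hk)] with x hx
      simp only [hψ]
      exact hx.trans_le (le_ciSup (hbddS x) k)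
    refine ⟨hLSC, ?_⟩
    -- integral inequality
    haveI := hμ
    have hint_φ : ∀ m, Integrable (φ m) (μn m) := fun m => by
      haveI := hμn m
      exact aux_integrable _ (hmeas m)
        (fun z => abs_le.2 ⟨by linarith [hnonneg m z], hbound m z⟩)
    have hstep : ∀ k, (∫ z, h k z ∂μ) ≤ liminf (fun n => ∫ z, φ n z ∂(μn n)) atTop := by
      intro k
      have tend := hweak (h k) (h_cont k) ⟨C, h_abs k⟩
      have hev : ∀ᶠ m in atTop, (∫ z, h k z ∂(μn m)) ≤ ∫ z, φ m z ∂(μn m) := by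
        filter_upwards [eventually_ge_atTop k] with m hm
        haveI := hμn m
        exact integral_mono (aux_integrable _ (h_cont k).measurable (h_abs k)) (hint_φ m)
          (fun z => h_le k m z hm)
      have hmass := hweak (fun _ => (1:ℝ)) continuous_const ⟨1, fun z => by norm_num⟩
      have hvb : IsBoundedUnder (· ≤ ·) atTop (fun m => ∫ z, φ m z ∂(μn m)) := by
        have hb2 : Tendsto (fun m => C * ∫ z, (1:ℝ) ∂(μn m)) atTop
            (𝓝 (C * ∫ z, (1:ℝ) ∂μ)) := hmass.const_mul C
        refine (hb2.isBoundedUnder_le).mono_le (Eventually.of_forall fun m => ?_)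
        haveI := hμn m
        calc ∫ z, φ m z ∂(μn m) ≤ ∫ _, C ∂(μn m) :=
              integral_mono (hint_φ m) (integrable_const C) (fun z => hbound m z)
          _ = C * ∫ z, (1:ℝ) ∂(μn m) := by
              simp [integral_const, smul_eq_mul]
              ring
      have h1 := liminf_le_liminf hev tend.isBoundedUnder_ge
        hvb.isCoboundedUnder_ge
      rwa [tend.liminf_eq] at h1
    have hψ_meas : Measurable
        (fun z => liminf (fun p : ℕ × S => φ p.1 p.2) (atTop ×ˢ 𝓝 z)) := hLSC.measurable
    have hint_ψ : Integrable
        (fun z => liminf (fun p : ℕ × S => φ p.1 p.2) (atTop ×ˢ 𝓝 z)) μ := by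
      refine aux_integrable μ (C := C) hψ_meas (fun z => ?_)
      rw [hψ z]
      refine abs_le.2 ⟨le_trans (by linarith) ((h_nonneg 0 z).trans (le_ciSup (hbddS z) 0)), ?_⟩
      exact ciSup_le fun k => h_le_C k z
    have mct := integral_tendsto_of_tendsto_of_monotone
      (fun k => aux_integrable μ (h_cont k).measurable (h_abs k)) hint_ψ
      (Eventually.of_forall h_mono)
      (Eventually.of_forall fun z => by
        rw [hψ z]
        exact tendsto_atTop_ciSup (h_mono z) (hbddS z))
    exact le_of_tendsto' mct hstep
end

section
/- (Reverse Fatou's lemma for weakly converging finite measures, limsup version; Lemma 2.2, inequality (2.2).) Let S be a metric space, let (μ_n) be a sequence of finite Borel measures on S converging weakly to a finite Borel measure μ, and let (φ_n) be a sequence of Borel measurable, nonnegative, uniformly bounded functions on S. Then the function z ↦ limsup_{n→∞, w→z} φ_n(w) is upper semicontinuous (hence Borel measurable) and ∫_S (limsup_{n→∞, w→z} φ_n(w)) μ(dz) ≥ limsup_{n→∞} ∫_S φ_n(z) μ_n(dz). -/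
open Filter MeasureTheory Set
open scoped Topology
open scoped ENNReal

section Aux
variable {S : Type*} [MetricSpace S]

/-- The pointwise liminf over `atTop ×ˢ 𝓝 z` is lower semicontinuous. -/
lemma aux_lsc (χ : ℕ → S → ℝ) (hnn : ∀ n z, 0 ≤ χ n z) (c : ℝ) (hb : ∀ n z, χ n z ≤ c) :
    LowerSemicontinuous fun z => liminf (fun p : ℕ × S => χ p.1 p.2) (atTop ×ˢ 𝓝 z) := by
  intro z y hy
  obtain ⟨y', hyy', hy'⟩ := exists_between hy
  have hcob : IsCoboundedUnder (· ≥ ·) (atTop ×ˢ 𝓝 z) (fun p : ℕ × S => χ p.1 p.2) :=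
    IsBoundedUnder.isCoboundedUnder_ge (isBoundedUnder_of ⟨c, fun (p : ℕ × S) => hb p.1 p.2⟩)
  have hbdd : IsBoundedUnder (· ≥ ·) (atTop ×ˢ 𝓝 z) (fun p : ℕ × S => χ p.1 p.2) :=
    isBoundedUnder_of ⟨0, fun (p : ℕ × S) => hnn p.1 p.2⟩
  have hev := eventually_lt_of_lt_liminf hy' hbdd
  rw [eventually_prod_iff] at hev
  obtain ⟨pa, hpa, pb, hpb, h⟩ := hev
  obtain ⟨r, hr, hball⟩ := Metric.eventually_nhds_iff.mp hpb
  rw [Metric.eventually_nhds_iff]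
  refine ⟨r, hr, fun z' hz' => ?_⟩
  have hev' : ∀ᶠ p : ℕ × S in atTop ×ˢ 𝓝 z', y' ≤ χ p.1 p.2 := by
    have hnb : ∀ᶠ w in 𝓝 z', pb w := by
      rw [Metric.eventually_nhds_iff]
      refine ⟨r - dist z' z, by linarith, fun w hw => hball ?_⟩
      calc dist w z ≤ dist w z' + dist z' z := dist_triangle _ _ _
        _ < r := by linarith
    filter_upwards [hpa.prod_mk hnb] with p hp using (h hp.1 hp.2).le
  have hcob' : IsCoboundedUnder (· ≥ ·) (atTop ×ˢ 𝓝 z') (fun p : ℕ × S => χ p.1 p.2) :=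
    IsBoundedUnder.isCoboundedUnder_ge (isBoundedUnder_of ⟨c, fun (p : ℕ × S) => hb p.1 p.2⟩)
  exact lt_of_lt_of_le hyy' (le_liminf_of_le hcob' hev')

/-- Key measure estimate: the measure of a strict superlevel set of the pointwise liminf is
at most the liminf of the measures of the superlevel sets, given the open-set portmanteau
condition. -/
lemma aux_meas_lt [MeasurableSpace S] [BorelSpace S]
    (μ : Measure S) (μn : ℕ → Measure S)
    (hopen : ∀ G, IsOpen G → μ G ≤ atTop.liminf fun n => μn n G)
    (χ : ℕ → S → ℝ) (hnn : ∀ n z, 0 ≤ χ n z) (c : ℝ) (hb : ∀ n z, χ n z ≤ c) (t : ℝ) :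
    μ {z | t < liminf (fun p : ℕ × S => χ p.1 p.2) (atTop ×ˢ 𝓝 z)} ≤
      atTop.liminf fun n => μn n {z | t < χ n z} := by
  set O : ℕ → Set S := fun N => {z | ∃ r > 0, ∀ m ≥ N, ∀ w, dist w z < r → t < χ m w} with hO
  have O_open : ∀ N, IsOpen (O N) := by
    intro N
    rw [Metric.isOpen_iff]
    rintro z ⟨r, hr, hz⟩
    refine ⟨r / 2, by linarith, fun z' hz' => ⟨r / 2, by linarith, fun m hm w hw => ?_⟩⟩
    have hzz' : dist z' z < r / 2 := Metric.mem_ball.mp hz'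
    refine hz m hm w ?_
    calc dist w z ≤ dist w z' + dist z' z := dist_triangle _ _ _
      _ < r := by linarith
  have incl : {z | t < liminf (fun p : ℕ × S => χ p.1 p.2) (atTop ×ˢ 𝓝 z)} ⊆ ⋃ N, O N := by
    intro z hz
    have hbdd : IsBoundedUnder (· ≥ ·) (atTop ×ˢ 𝓝 z) (fun p : ℕ × S => χ p.1 p.2) :=
      isBoundedUnder_of ⟨0, fun (p : ℕ × S) => hnn p.1 p.2⟩
    have hev := eventually_lt_of_lt_liminf hz hbdd
    rw [eventually_prod_iff] at hev
    obtain ⟨pa, hpa, pb, hpb, h⟩ := hev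
    obtain ⟨N, hN⟩ := eventually_atTop.mp hpa
    obtain ⟨r, hr, hball⟩ := Metric.eventually_nhds_iff.mp hpb
    exact mem_iUnion.mpr ⟨N, r, hr, fun m hm w hw => h (hN m hm) (hball hw)⟩
  have O_mono : Monotone O := by
    rintro N N' hNN' z ⟨r, hr, hz⟩
    exact ⟨r, hr, fun m hm => hz m (le_trans hNN' hm)⟩
  calc μ {z | t < liminf (fun p : ℕ × S => χ p.1 p.2) (atTop ×ˢ 𝓝 z)}
      ≤ μ (⋃ N, O N) := measure_mono incl
    _ = ⨆ N, μ (O N) := (O_mono.directed_le).measure_iUnion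
    _ ≤ atTop.liminf fun n => μn n {z | t < χ n z} := by
        refine iSup_le fun N => (hopen _ (O_open N)).trans (liminf_le_liminf ?_)
        filter_upwards [eventually_ge_atTop N] with n hn
        refine measure_mono ?_
        rintro z ⟨r, hr, hz⟩
        exact hz n hn z (by simpa [dist_self] using hr)

/-- Core liminf inequality on Lebesgue integrals. -/
lemma aux_core [MeasurableSpace S] [BorelSpace S]
    (μ : Measure S) (μn : ℕ → Measure S)
    (hopen : ∀ G, IsOpen G → μ G ≤ atTop.liminf fun n => μn n G)
    (χ : ℕ → S → ℝ) (hmeas : ∀ n, Measurable (χ n))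
    (hnn : ∀ n z, 0 ≤ χ n z) (c : ℝ) (hb : ∀ n z, χ n z ≤ c) :
    ∫⁻ z, ENNReal.ofReal (liminf (fun p : ℕ × S => χ p.1 p.2) (atTop ×ˢ 𝓝 z)) ∂μ ≤
      atTop.liminf fun n => ∫⁻ z, ENNReal.ofReal (χ n z) ∂(μn n) := by
  have θmeas : Measurable fun z => liminf (fun p : ℕ × S => χ p.1 p.2) (atTop ×ˢ 𝓝 z) :=
    (aux_lsc χ hnn c hb).measurable
  have θnn : ∀ z, 0 ≤ liminf (fun p : ℕ × S => χ p.1 p.2) (atTop ×ˢ 𝓝 z) := by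
    intro z
    have hcob : IsCoboundedUnder (· ≥ ·) (atTop ×ˢ 𝓝 z) (fun p : ℕ × S => χ p.1 p.2) :=
      IsBoundedUnder.isCoboundedUnder_ge (isBoundedUnder_of ⟨c, fun (p : ℕ × S) => hb p.1 p.2⟩)
    exact le_liminf_of_le hcob (Eventually.of_forall fun (p : ℕ × S) => hnn p.1 p.2)
  rw [lintegral_eq_lintegral_meas_lt μ (Eventually.of_forall θnn) θmeas.aemeasurable]
  have hrw : (fun n => ∫⁻ z, ENNReal.ofReal (χ n z) ∂(μn n)) =
      fun n => ∫⁻ t in Ioi 0, μn n {a | t < χ n a} := by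
    funext n
    exact lintegral_eq_lintegral_meas_lt (μn n) (Eventually.of_forall (hnn n))
      (hmeas n).aemeasurable
  rw [hrw]
  calc ∫⁻ t in Ioi 0, μ {a | t < liminf (fun p : ℕ × S => χ p.1 p.2) (atTop ×ˢ 𝓝 a)}
      ≤ ∫⁻ t in Ioi 0, atTop.liminf fun n => μn n {a | t < χ n a} :=
        lintegral_mono fun t => aux_meas_lt μ μn hopen χ hnn c hb t
    _ ≤ atTop.liminf fun n => ∫⁻ t in Ioi 0, μn n {a | t < χ n a} :=
        lintegral_liminf_le fun n => Antitone.measurable fun s t hst =>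
          measure_mono fun ω hω => lt_of_le_of_lt hst hω

end Aux

section Aux2
variable {S : Type*} [MetricSpace S] [MeasurableSpace S] [BorelSpace S]

lemma aux_open (μ : Measure S) (μn : ℕ → Measure S)
    (hμ : IsFiniteMeasure μ) (hμn : ∀ n, IsFiniteMeasure (μn n))
    (hweak : ∀ g : S → ℝ, Continuous g → (∃ C : ℝ, ∀ z, |g z| ≤ C) →
      Tendsto (fun n => ∫ z, g z ∂(μn n)) atTop (𝓝 (∫ z, g z ∂μ))) :
    (∀ G, IsOpen G → μ G ≤ atTop.liminf fun n => μn n G) ∧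
      Tendsto (fun n => μn n univ) atTop (𝓝 (μ univ)) := by
  haveI := hμ
  haveI := hμn
  set ν : FiniteMeasure S := ⟨μ, hμ⟩ with hν
  set νs : ℕ → FiniteMeasure S := fun n => ⟨μn n, hμn n⟩ with hνs
  have htend : Tendsto νs atTop (𝓝 ν) := by
    rw [FiniteMeasure.tendsto_iff_forall_integral_tendsto]
    intro f
    exact hweak f f.continuous ⟨‖f‖, fun z => by
      simpa [Real.norm_eq_abs] using f.norm_coe_le_norm z⟩
  have hmass : Tendsto (fun n => μn n univ) atTop (𝓝 (μ univ)) := by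
    have h1 := hweak (fun _ => (1 : ℝ)) continuous_const ⟨1, fun z => by norm_num⟩
    simp only [integral_const, smul_eq_mul, mul_one] at h1
    have h2 : Tendsto (fun n => ENNReal.ofReal (μn n univ).toReal) atTop
        (𝓝 (ENNReal.ofReal (μ univ).toReal)) := ENNReal.tendsto_ofReal h1
    simpa [ENNReal.ofReal_toReal (measure_ne_top _ _)] using h2
  refine ⟨fun G hG => ?_, hmass⟩
  have hclosed : atTop.limsup (fun n => μn n Gᶜ) ≤ μ Gᶜ :=
    FiniteMeasure.limsup_measure_closed_le_of_tendsto htend (isClosed_compl_iff.mpr hG)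
  refine ENNReal.le_of_forall_pos_le_add fun ε hε hfin => ?_
  set δ : ℝ≥0∞ := (ε : ℝ≥0∞) / 2 with hδ
  have hδ0 : δ ≠ 0 := by
    simp [hδ, ENNReal.div_eq_zero_iff, ENNReal.coe_eq_zero, hε.ne']
  have hevA : ∀ᶠ n in atTop, μ univ - δ ≤ μn n univ := by
    rcases le_or_gt (μ univ) δ with h | h
    · exact Eventually.of_forall fun n => by simp [tsub_eq_zero_of_le h]
    · have : ∀ᶠ n in atTop, μ univ - δ < μn n univ :=
        hmass.eventually (eventually_gt_nhds (ENNReal.sub_lt_self (measure_ne_top _ _)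
          (by intro h0; simp [h0] at h) hδ0))
      exact this.mono fun n hn => hn.le
  have hevB : ∀ᶠ n in atTop, μn n Gᶜ ≤ μ Gᶜ + δ := by
    have : atTop.limsup (fun n => μn n Gᶜ) < μ Gᶜ + δ :=
      lt_of_le_of_lt hclosed (ENNReal.lt_add_right (measure_ne_top _ _) hδ0)
    exact (eventually_lt_of_limsup_lt this).mono fun n hn => hn.le
  have hev : ∀ᶠ n in atTop, μ G - ε ≤ μn n G := by
    filter_upwards [hevA, hevB] with n hA hB
    have h1 : μn n G = μn n univ - μn n Gᶜ := by
      have := measure_compl hG.measurableSet.compl (measure_ne_top (μn n) _)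
      rwa [compl_compl] at this
    have h2 : μ G = μ univ - μ Gᶜ := by
      have := measure_compl hG.measurableSet.compl (measure_ne_top μ _)
      rwa [compl_compl] at this
    have h3 : (μ univ - δ) - (μ Gᶜ + δ) ≤ μn n univ - μn n Gᶜ := tsub_le_tsub hA hB
    have h4 : (μ univ - δ) - (μ Gᶜ + δ) = μ G - ε := by
      rw [tsub_tsub, h2, tsub_tsub]
      congr 1
      rw [add_comm δ (μ Gᶜ + δ), add_assoc, hδ, ENNReal.add_halves]
    rw [h1]
    exact h4 ▸ h3
  have : μ G - ε ≤ atTop.liminf fun n => μn n G := le_liminf_of_le (by isBoundedDefault) hev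
  exact tsub_le_iff_right.mp this

end Aux2

/-- **Reverse Fatou's lemma for weakly converging finite measures (limsup version).**
If finite Borel measures `μn` on a metric space `S` converge weakly to a finite Borel
measure `μ`, and `φ n` are Borel measurable, nonnegative, uniformly bounded functions,
then the function `z ↦ limsup_{n→∞, w→z} φ n w` is upper semicontinuous and
`∫ limsup dμ ≥ limsup ∫ φ n dμn`. -/
theorem fatou_weak_convergence_limsup
    {S : Type*} [MetricSpace S] [MeasurableSpace S] [BorelSpace S]
    (μ : Measure S) (μn : ℕ → Measure S)
    (hμ : IsFiniteMeasure μ) (hμn : ∀ n, IsFiniteMeasure (μn n))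
    (hweak : ∀ g : S → ℝ, Continuous g → (∃ C : ℝ, ∀ z, |g z| ≤ C) →
      Tendsto (fun n => ∫ z, g z ∂(μn n)) atTop (𝓝 (∫ z, g z ∂μ)))
    (φ : ℕ → S → ℝ) (hmeas : ∀ n, Measurable (φ n))
    (hnonneg : ∀ n z, 0 ≤ φ n z) (C : ℝ) (hbound : ∀ n z, φ n z ≤ C) :
    UpperSemicontinuous
      (fun z => limsup (fun p : ℕ × S => φ p.1 p.2) (atTop ×ˢ 𝓝 z)) ∧
    limsup (fun n => ∫ z, φ n z ∂(μn n)) atTop ≤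
      ∫ z, limsup (fun p : ℕ × S => φ p.1 p.2) (atTop ×ˢ 𝓝 z) ∂μ := by

  haveI := hμ
  haveI := hμn
  obtain ⟨hopen, hmass⟩ := aux_open μ μn hμ hμn hweak
  set ψ : S → ℝ := fun z => limsup (fun p : ℕ × S => φ p.1 p.2) (atTop ×ˢ 𝓝 z) with hψ
  set χ : ℕ → S → ℝ := fun n z => C - φ n z with hχ
  have hχmeas : ∀ n, Measurable (χ n) := fun n => measurable_const.sub (hmeas n)
  have hχnn : ∀ n z, 0 ≤ χ n z := fun n z => sub_nonneg.mpr (hbound n z)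
  have hχb : ∀ n z, χ n z ≤ C := fun n z => sub_le_self C (hnonneg n z)
  have hdual : ∀ z, liminf (fun p : ℕ × S => χ p.1 p.2) (atTop ×ˢ 𝓝 z) = C - ψ z := by
    intro z
    exact liminf_const_sub (atTop ×ˢ 𝓝 z) (fun p : ℕ × S => φ p.1 p.2) C
      (isBoundedUnder_of ⟨C, fun (p : ℕ × S) => hbound p.1 p.2⟩)
      (IsBoundedUnder.isCoboundedUnder_le
        (isBoundedUnder_of ⟨0, fun (p : ℕ × S) => hnonneg p.1 p.2⟩))
  have hlsc := aux_lsc χ hχnn C hχb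
  have husc : UpperSemicontinuous ψ := by
    intro z y hy
    have h1 : C - y < liminf (fun p : ℕ × S => χ p.1 p.2) (atTop ×ˢ 𝓝 z) := by
      rw [hdual z]
      have : ψ z < y := hy
      linarith
    filter_upwards [hlsc z (C - y) h1] with z' hz'
    have hd := hdual z'
    rw [hd] at hz'
    show ψ z' < y
    linarith
  have hψnn : ∀ z, 0 ≤ ψ z := fun z =>
    le_limsup_of_frequently_le (Frequently.of_forall fun (p : ℕ × S) => hnonneg p.1 p.2)
      (isBoundedUnder_of ⟨C, fun (p : ℕ × S) => hbound p.1 p.2⟩)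
  have hψle : ∀ z, ψ z ≤ C := fun z =>
    limsup_le_of_le
      (IsBoundedUnder.isCoboundedUnder_le
        (isBoundedUnder_of ⟨0, fun (p : ℕ × S) => hnonneg p.1 p.2⟩))
      (Eventually.of_forall fun (p : ℕ × S) => hbound p.1 p.2)
  have hψmeas : Measurable ψ := husc.measurable
  refine ⟨husc, ?_⟩
  set K := ∫⁻ z, ENNReal.ofReal (ψ z) ∂μ with hK
  set cB := ENNReal.ofReal C * μ univ with hcinf
  have hcfin : cB ≠ ∞ := ENNReal.mul_ne_top ENNReal.ofReal_ne_top (measure_ne_top μ _)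
  have hKle : K ≤ cB := by
    calc K ≤ ∫⁻ _z, ENNReal.ofReal C ∂μ :=
          lintegral_mono fun z => ENNReal.ofReal_le_ofReal (hψle z)
      _ = cB := lintegral_const _
  have hKfin : K ≠ ∞ := ne_top_of_le_ne_top hcfin hKle
  have hcore := aux_core μ μn hopen χ hχmeas hχnn C hχb
  have hθeq : ∫⁻ z, ENNReal.ofReal (liminf (fun p : ℕ × S => χ p.1 p.2) (atTop ×ˢ 𝓝 z)) ∂μ
      = cB - K := by
    have hpt : ∀ z, ENNReal.ofReal (liminf (fun p : ℕ × S => χ p.1 p.2) (atTop ×ˢ 𝓝 z))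
        = ENNReal.ofReal C - ENNReal.ofReal (ψ z) := fun z => by
      rw [hdual z, ENNReal.ofReal_sub _ (hψnn z)]
    calc ∫⁻ z, ENNReal.ofReal (liminf (fun p : ℕ × S => χ p.1 p.2) (atTop ×ˢ 𝓝 z)) ∂μ
        = ∫⁻ z, (ENNReal.ofReal C - ENNReal.ofReal (ψ z)) ∂μ := lintegral_congr hpt
      _ = (∫⁻ _z, ENNReal.ofReal C ∂μ) - K := by
          rw [lintegral_sub hψmeas.ennreal_ofReal hKfin
            (Eventually.of_forall fun z => ENNReal.ofReal_le_ofReal (hψle z))]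
      _ = cB - K := by rw [lintegral_const]
  set L : ℕ → ℝ≥0∞ := fun n => ∫⁻ z, ENNReal.ofReal (φ n z) ∂(μn n) with hL
  set M : ℕ → ℝ≥0∞ := fun n => ∫⁻ z, ENNReal.ofReal (χ n z) ∂(μn n) with hM
  set cn : ℕ → ℝ≥0∞ := fun n => ENNReal.ofReal C * μn n univ with hcn'
  have hliminfM : cB - K ≤ atTop.liminf M := hθeq ▸ hcore
  have hLM : ∀ n, L n + M n = cn n := by
    intro n
    have hadd : ∀ z, ENNReal.ofReal (φ n z) + ENNReal.ofReal (χ n z) = ENNReal.ofReal C := by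
      intro z
      rw [← ENNReal.ofReal_add (hnonneg n z) (hχnn n z)]
      congr 1
      simp [hχ]
    calc L n + M n = ∫⁻ z, (ENNReal.ofReal (φ n z) + ENNReal.ofReal (χ n z)) ∂(μn n) :=
          (lintegral_add_left (hmeas n).ennreal_ofReal _).symm
      _ = ∫⁻ _z, ENNReal.ofReal C ∂(μn n) := lintegral_congr hadd
      _ = cn n := lintegral_const _
  have hcnfin : ∀ n, cn n ≠ ∞ := fun n =>
    ENNReal.mul_ne_top ENNReal.ofReal_ne_top (measure_ne_top (μn n) _)
  have hMle : ∀ n, M n ≤ cn n := fun n => le_add_self.trans_eq (hLM n)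
  have hMfin : ∀ n, M n ≠ ∞ := fun n => ne_top_of_le_ne_top (hcnfin n) (hMle n)
  have hLeq : ∀ n, L n = cn n - M n := fun n => ENNReal.eq_sub_of_add_eq (hMfin n) (hLM n)
  have hcn : Tendsto cn atTop (𝓝 cB) :=
    ENNReal.Tendsto.const_mul hmass (Or.inr ENNReal.ofReal_ne_top)
  have hmain : atTop.limsup L ≤ K := by
    refine ENNReal.le_of_forall_pos_le_add fun ε hε _ => ?_
    have hεne : (ε : ℝ≥0∞) ≠ 0 := by exact_mod_cast hε.ne'
    have hev : ∀ᶠ n in atTop, cn n ≤ cB + ε :=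
      hcn.eventually_le_const (ENNReal.lt_add_right hcfin hεne)
    have h1 : atTop.limsup L ≤ atTop.limsup (fun n => (cB + ε) - M n) := by
      refine limsup_le_limsup ?_ (isCoboundedUnder_le_of_le atTop fun n => zero_le)
        (isBoundedUnder_of ⟨⊤, fun _ => le_top⟩)
      filter_upwards [hev] with n hn
      rw [hLeq n]
      exact tsub_le_tsub hn le_rfl
    have h2 : atTop.limsup (fun n => (cB + ε) - M n) = (cB + ε) - atTop.liminf M :=
      ENNReal.limsup_const_sub atTop M (ENNReal.add_ne_top.mpr ⟨hcfin, ENNReal.coe_ne_top⟩)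
    rw [h2] at h1
    refine h1.trans ?_
    rw [tsub_le_iff_right]
    calc cB + (ε : ℝ≥0∞) = (K + (cB - K)) + ε := by rw [add_tsub_cancel_of_le hKle]
      _ ≤ (K + atTop.liminf M) + ε := by gcongr
      _ = K + ε + atTop.liminf M := by ring
  have hInt : ∀ n, ∫ z, φ n z ∂(μn n) = (L n).toReal := fun n =>
    integral_eq_lintegral_of_nonneg_ae (Eventually.of_forall (hnonneg n))
      (hmeas n).aestronglyMeasurable
  have hIntψ : ∫ z, ψ z ∂μ = K.toReal :=
    integral_eq_lintegral_of_nonneg_ae (Eventually.of_forall hψnn) hψmeas.aestronglyMeasurable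
  rw [hIntψ]
  have hrw2 : (fun n => ∫ z, φ n z ∂(μn n)) = fun n => (L n).toReal := funext hInt
  rw [hrw2]
  refine le_of_forall_gt_imp_ge_of_dense fun b hb => ?_
  have hKb : atTop.limsup L < ENNReal.ofReal b :=
    lt_of_le_of_lt hmain ((ENNReal.lt_ofReal_iff_toReal_lt hKfin).mpr hb)
  have hev := eventually_lt_of_limsup_lt hKb
  refine limsup_le_of_le
    (IsBoundedUnder.isCoboundedUnder_le
      (isBoundedUnder_of ⟨0, fun n => ENNReal.toReal_nonneg⟩)) ?_
  filter_upwards [hev] with n hn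
  exact (ENNReal.toReal_lt_of_lt_ofReal hn).le
end

section
/- (Proposition 2.1, inclusions (eq.up).) Let ε ∈ (0,a). Then: (i) if T_{x+ε}^+ < ∞ and T_{x+ε}^+ < T_{x+ε−a}^-, then T_{x+ε}^+ < τ_a; and (ii) if T_{x+ε}^+ < ∞ and T_{x+ε}^+ < τ_a, then T_{x+ε}^+ < T_{x−a}^-. -/
open Filter Set
open scoped NNReal ENNReal Topology

noncomputable section

/-- The first time `t ∈ [0,∞)` at which the predicate `P` holds, valued in `[0,∞]`
(with the convention `inf ∅ = ∞`). -/
def hitTime (P : ℝ≥0 → Prop) : ℝ≥0∞ :=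
  sInf ((fun t : ℝ≥0 => (t : ℝ≥0∞)) '' {t | P t})

/-- The first passage time of `f` above the level `y`. -/
def Tplus (f : ℝ≥0 → ℝ) (y : ℝ) : ℝ≥0∞ := hitTime (fun t => y < f t)

/-- The first passage time of `f` below the level `y`. -/
def Tminus (f : ℝ≥0 → ℝ) (y : ℝ) : ℝ≥0∞ := hitTime (fun t => f t < y)

/-- The running maximum `M(t) = sup_{0 ≤ s ≤ t} f(s)`. -/
def runMax (f : ℝ≥0 → ℝ) (t : ℝ≥0) : ℝ := sSup (f '' Set.Iic t)

/-- The drawdown `Y(t) = M(t) − f(t)`. -/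
def drawdown (f : ℝ≥0 → ℝ) (t : ℝ≥0) : ℝ := runMax f t - f t

/-- The first time the drawdown exceeds `a`. -/
def tauD (f : ℝ≥0 → ℝ) (a : ℝ) : ℝ≥0∞ := hitTime (fun t => a < drawdown f t)

/-- Evaluation point of a finite `[0,∞]`-valued time. -/
def ev (T : ℝ≥0∞) : ℝ≥0 := T.toNNReal

end


lemma hitTime_le' {P : ℝ≥0 → Prop} {t : ℝ≥0} (h : P t) : hitTime P ≤ t :=
  sInf_le ⟨t, h, rfl⟩

lemma not_of_lt_hitTime' {P : ℝ≥0 → Prop} {t : ℝ≥0} (h : (t : ℝ≥0∞) < hitTime P) : ¬ P t :=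
  fun hp => absurd (hitTime_le' hp) (not_le.mpr h)

lemma coe_le_hitTime' {P : ℝ≥0 → Prop} {c : ℝ≥0} (h : ∀ s, P s → c ≤ s) :
    (c : ℝ≥0∞) ≤ hitTime P :=
  le_sInf (by rintro u ⟨s, hs, rfl⟩; simpa using ENNReal.coe_le_coe.2 (h s hs))

lemma coe_lt_hitTime' {P : ℝ≥0 → Prop} {c d : ℝ≥0} (hd : 0 < d)
    (h : ∀ s, s < c + d → ¬ P s) : (c : ℝ≥0∞) < hitTime P := by
  refine lt_of_lt_of_le ?_ (coe_le_hitTime' (fun s hs => not_lt.1 fun h' => h s h' hs))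
  exact_mod_cast lt_add_of_pos_right c hd

lemma nnreal_dist_lt {s τ δ' : ℝ≥0} {δ : ℝ} (hτs : τ ≤ s) (hs : s < τ + δ')
    (hδ'le : (δ' : ℝ) ≤ δ) : dist s τ < δ := by
  have hτs' : (τ : ℝ) ≤ s := by exact_mod_cast hτs
  have hs' : (s : ℝ) < (τ : ℝ) + δ' := by exact_mod_cast hs
  rw [NNReal.dist_eq, abs_of_nonneg (by linarith)]
  linarith

lemma le_f_ev_Tplus (f : ℝ≥0 → ℝ) (y : ℝ)
    (hrc : ∀ t : ℝ≥0, ContinuousWithinAt f (Set.Ici t) t) (hne : Tplus f y ≠ ⊤) :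
    y ≤ f (ev (Tplus f y)) := by
  set τ := ev (Tplus f y) with hτ
  have hcoe : (τ : ℝ≥0∞) = Tplus f y := ENNReal.coe_toNNReal hne
  by_contra h
  push_neg at h
  obtain ⟨δ, hδpos, hδ⟩ := Metric.continuousWithinAt_iff.1 (hrc τ) (y - f τ) (by linarith)
  set δ' : ℝ≥0 := δ.toNNReal with hδ'
  have hδ'pos : 0 < δ' := Real.toNNReal_pos.2 hδpos
  have hδ'le : (δ' : ℝ) ≤ δ := by rw [hδ', Real.coe_toNNReal _ hδpos.le]
  have hlt : Tplus f y < (τ : ℝ≥0∞) + δ' := by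
    rw [hcoe.symm]
    exact ENNReal.lt_add_right (by simp) (by exact_mod_cast hδ'pos.ne')
  obtain ⟨u, hu, hult⟩ := sInf_lt_iff.1 hlt
  obtain ⟨s, hs, rfl⟩ := hu
  have hτs : τ ≤ s := by
    have : (τ : ℝ≥0∞) ≤ s := hcoe ▸ hitTime_le' hs
    exact_mod_cast this
  have hslt : s < τ + δ' := by
    have : ((s : ℝ≥0∞)) < ((τ + δ' : ℝ≥0) : ℝ≥0∞) := by push_cast; exact hult
    exact_mod_cast this
  have := hδ (mem_Ici.2 hτs) (nnreal_dist_lt hτs hslt hδ'le)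
  rw [Real.dist_eq] at this
  have : f s < y := by cases abs_lt.1 this; linarith
  exact absurd hs (not_lt.2 this.le)

lemma runMax_le' {f : ℝ≥0 → ℝ} {t : ℝ≥0} {B : ℝ} (h : ∀ s ≤ t, f s ≤ B) :
    runMax f t ≤ B :=
  csSup_le ⟨f 0, ⟨0, by simp, rfl⟩⟩ (by rintro u ⟨s, hs, rfl⟩; exact h s hs)

lemma le_runMax' {f : ℝ≥0 → ℝ} (hbdd : ∀ b : ℝ≥0, ∃ C : ℝ, ∀ t ≤ b, |f t| ≤ C)
    {s t : ℝ≥0} (h : s ≤ t) : f s ≤ runMax f t := by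
  obtain ⟨C, hC⟩ := hbdd t
  exact le_csSup ⟨C, by rintro u ⟨r, hr, rfl⟩; exact (abs_le.1 (hC r hr)).2⟩ ⟨s, h, rfl⟩

/-- **Proposition 2.1, inclusions (eq.up).**
For `ε ∈ (0,a)`: (i) if `T_{x+ε}^+ < ∞` and `T_{x+ε}^+ < T_{x+ε−a}^-` then
`T_{x+ε}^+ < τ_a`; (ii) if `T_{x+ε}^+ < ∞` and `T_{x+ε}^+ < τ_a` then
`T_{x+ε}^+ < T_{x−a}^-`. -/
theorem eq_up_inclusions (x a : ℝ) (ha : 0 < a) (f : ℝ≥0 → ℝ)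
    (hrc : ∀ t : ℝ≥0, ContinuousWithinAt f (Set.Ici t) t)
    (hbdd : ∀ b : ℝ≥0, ∃ C : ℝ, ∀ t ≤ b, |f t| ≤ C)
    (hf0 : f 0 = x) (ε : ℝ) (hε : 0 < ε) (hεa : ε < a) :
    (Tplus f (x + ε) ≠ ⊤ → Tplus f (x + ε) < Tminus f (x + ε - a) →
      Tplus f (x + ε) < tauD f a) ∧
    (Tplus f (x + ε) ≠ ⊤ → Tplus f (x + ε) < tauD f a →
      Tplus f (x + ε) < Tminus f (x - a)) := by
  constructor
  · intro hne h2
    set τ := ev (Tplus f (x + ε)) with hτdef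
    have hcoe : (τ : ℝ≥0∞) = Tplus f (x + ε) := ENNReal.coe_toNNReal hne
    have hfτ : x + ε ≤ f τ := le_f_ev_Tplus f (x + ε) hrc hne
    have hlt : ∀ s : ℝ≥0, s < τ → f s ≤ x + ε := by
      intro s hs
      have : (s : ℝ≥0∞) < Tplus f (x + ε) := hcoe ▸ ENNReal.coe_lt_coe.2 hs
      exact not_lt.1 (not_of_lt_hitTime' this)
    have hlow : ∀ s : ℝ≥0, s ≤ τ → x + ε - a ≤ f s := by
      intro s hs
      have : (s : ℝ≥0∞) < Tminus f (x + ε - a) :=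
        lt_of_le_of_lt (hcoe ▸ ENNReal.coe_le_coe.2 hs) h2
      exact not_lt.1 (not_of_lt_hitTime' this)
    obtain ⟨δ, hδpos, hδ⟩ := Metric.continuousWithinAt_iff.1 (hrc τ) (a / 2) (by linarith)
    set δ' : ℝ≥0 := δ.toNNReal with hδ'
    have hδ'pos : 0 < δ' := Real.toNNReal_pos.2 hδpos
    have hδ'le : (δ' : ℝ) ≤ δ := by rw [hδ', Real.coe_toNNReal _ hδpos.le]
    rw [← hcoe]
    refine coe_lt_hitTime' hδ'pos ?_
    intro t ht
    refine not_lt.2 ?_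
    rcases lt_or_ge t τ with h | h
    · have h1 : runMax f t ≤ x + ε := runMax_le' (fun s hs => hlt s (lt_of_le_of_lt hs h))
      have h2' : x + ε - a ≤ f t := hlow t h.le
      simp only [drawdown]; linarith
    · have hnear : ∀ s : ℝ≥0, τ ≤ s → s ≤ t → |f s - f τ| < a / 2 := by
        intro s hτs hst
        have := hδ (mem_Ici.2 hτs) (nnreal_dist_lt hτs (lt_of_le_of_lt hst ht) hδ'le)
        rwa [Real.dist_eq] at this
      have h1 : runMax f t ≤ f τ + a / 2 := by
        refine runMax_le' fun s hs => ?_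
        rcases lt_or_ge s τ with h' | h'
        · have := hlt s h'; linarith
        · have := abs_lt.1 (hnear s h' hs); linarith
      have h2' : f τ - a / 2 < f t := by
        have := abs_lt.1 (hnear t h le_rfl); linarith
      simp only [drawdown]; linarith
  · intro hne h2
    set τ := ev (Tplus f (x + ε)) with hτdef
    have hcoe : (τ : ℝ≥0∞) = Tplus f (x + ε) := ENNReal.coe_toNNReal hne
    have hfτ : x + ε ≤ f τ := le_f_ev_Tplus f (x + ε) hrc hne
    have key : ∀ s : ℝ≥0, s ≤ τ → x - a ≤ f s := by
      intro s hs
      have hdd : drawdown f s ≤ a := by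
        have : (s : ℝ≥0∞) < tauD f a :=
          lt_of_le_of_lt (hcoe ▸ ENNReal.coe_le_coe.2 hs) h2
        exact not_lt.1 (not_of_lt_hitTime' this)
      have hM : x ≤ runMax f s := hf0 ▸ le_runMax' hbdd (zero_le : (0:ℝ≥0) ≤ s)
      have : drawdown f s = runMax f s - f s := rfl
      linarith
    obtain ⟨δ, hδpos, hδ⟩ := Metric.continuousWithinAt_iff.1 (hrc τ) (ε + a) (by linarith)
    set δ' : ℝ≥0 := δ.toNNReal with hδ'
    have hδ'pos : 0 < δ' := Real.toNNReal_pos.2 hδpos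
    have hδ'le : (δ' : ℝ) ≤ δ := by rw [hδ', Real.coe_toNNReal _ hδpos.le]
    rw [← hcoe]
    refine coe_lt_hitTime' hδ'pos ?_
    intro t ht
    refine not_lt.2 ?_
    rcases le_or_gt t τ with h | h
    · exact key t h
    · have := hδ (mem_Ici.2 h.le) (nnreal_dist_lt h.le ht hδ'le)
      rw [Real.dist_eq] at this
      have := abs_lt.1 this
      linarith [this.1]
end

section
/- (Corollary 2.3, bounds on the drawdown-time transform.) For every ε ∈ (0,a) and q, s ≥ 0, e^{−sε} C^{(q,s)}(x; x−a, x+ε) ≤ E[ e^{−q τ_a − s(Y_{τ_a} − a)} 1{τ_a < ∞, τ_a < T_{x+ε}^+} ] ≤ e^{sε} C^{(q,s)}(x; x+ε−a, x+ε). -/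
open Filter Set
open scoped NNReal ENNReal Topology

noncomputable section

open MeasureTheory

open Classical in
/-- Integrand of the two-sided exit quantity `B₁^{(q)}(·;u,v)`, as a function of the
path `f`: `e^{−q T_v^+} 1{T_v^+ < ∞, T_v^+ < T_u^-, f(T_v^+) = v}`. -/
def b1val (q u v : ℝ) (f : ℝ≥0 → ℝ) : ℝ :=
  if Tplus f v ≠ ⊤ ∧ Tplus f v < Tminus f u ∧ f (ev (Tplus f v)) = v then
    Real.exp (-q * ((ev (Tplus f v) : ℝ))) else 0

open Classical in
/-- Integrand of the overshoot exit quantity `B₂^{(q)}(·,A;u,v)`: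
`e^{−q T_v^+} 1{T_v^+ < ∞, T_v^+ < T_u^-, f(T_v^+) − v ∈ A}`. -/
def b2val (q u v : ℝ) (A : Set ℝ) (f : ℝ≥0 → ℝ) : ℝ :=
  if Tplus f v ≠ ⊤ ∧ Tplus f v < Tminus f u ∧ f (ev (Tplus f v)) - v ∈ A then
    Real.exp (-q * ((ev (Tplus f v) : ℝ))) else 0

open Classical in
/-- Integrand of the downward exit quantity `C^{(q,s)}(·;u,v)`:
`e^{−q T_u^- − s(u − f(T_u^-))} 1{T_u^- < ∞, T_u^- < T_v^+}`. -/
def cval (q s u v : ℝ) (f : ℝ≥0 → ℝ) : ℝ :=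
  if Tminus f u ≠ ⊤ ∧ Tminus f u < Tplus f v then
    Real.exp (-q * ((ev (Tminus f u) : ℝ)) - s * (u - f (ev (Tminus f u)))) else 0

open Classical in
/-- `e^{−q T_v^+} 1{T_v^+ < ∞, T_v^+ < τ_a, f(T_v^+) = v}`. -/
def m1val (q v a : ℝ) (f : ℝ≥0 → ℝ) : ℝ :=
  if Tplus f v ≠ ⊤ ∧ Tplus f v < tauD f a ∧ f (ev (Tplus f v)) = v then
    Real.exp (-q * ((ev (Tplus f v) : ℝ))) else 0

open Classical in
/-- `e^{−q T_v^+} 1{T_v^+ < ∞, T_v^+ < τ_a, f(T_v^+) − v ∈ A}`. -/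
def m2val (q v a : ℝ) (A : Set ℝ) (f : ℝ≥0 → ℝ) : ℝ :=
  if Tplus f v ≠ ⊤ ∧ Tplus f v < tauD f a ∧ f (ev (Tplus f v)) - v ∈ A then
    Real.exp (-q * ((ev (Tplus f v) : ℝ))) else 0

open Classical in
/-- `e^{−q τ_a − s(Y(τ_a) − a)} 1{τ_a < ∞, τ_a < T_v^+}`. -/
def m3val (q s a v : ℝ) (f : ℝ≥0 → ℝ) : ℝ :=
  if tauD f a ≠ ⊤ ∧ tauD f a < Tplus f v then
    Real.exp (-q * ((ev (tauD f a) : ℝ)) - s * (drawdown f (ev (tauD f a)) - a)) else 0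

end

open MeasureTheory

namespace DDAux

lemma hitTime_le {P : ℝ≥0 → Prop} {t : ℝ≥0} (h : P t) : hitTime P ≤ t :=
  sInf_le ⟨t, h, rfl⟩

lemma hitTime_mono {P Q : ℝ≥0 → Prop} (h : ∀ t, P t → Q t) : hitTime Q ≤ hitTime P :=
  sInf_le_sInf (by rintro e ⟨t, ht, rfl⟩; exact ⟨t, h t ht, rfl⟩)

lemma exists_hit_lt {P : ℝ≥0 → Prop} (h : hitTime P ≠ ⊤) {δ : ℝ≥0} (hδ : 0 < δ) :
    ∃ t : ℝ≥0, P t ∧ (t : ℝ≥0∞) < hitTime P + δ := by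
  have hlt : hitTime P < hitTime P + δ :=
    ENNReal.lt_add_right h (by exact_mod_cast hδ.ne')
  obtain ⟨e, he, hlt'⟩ := sInf_lt_iff.mp hlt
  obtain ⟨t, ht, rfl⟩ := he
  exact ⟨t, ht, hlt'⟩

lemma coe_ev {T : ℝ≥0∞} (h : T ≠ ⊤) : (ev T : ℝ≥0∞) = T := ENNReal.coe_toNNReal h

lemma rc_nhds {f : ℝ≥0 → ℝ} {t : ℝ≥0} (hrc : ContinuousWithinAt f (Set.Ici t) t)
    {U : Set ℝ} (hU : U ∈ nhds (f t)) :
    ∃ δ : ℝ≥0, 0 < δ ∧ ∀ s, t ≤ s → s < t + δ → f s ∈ U := by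
  have h1 : f ⁻¹' U ∈ nhdsWithin t (Set.Ici t) := hrc hU
  rw [mem_nhdsWithin] at h1
  obtain ⟨V, hVopen, htV, hVsub⟩ := h1
  obtain ⟨r, hr, hball⟩ := Metric.isOpen_iff.mp hVopen t htV
  refine ⟨Real.toNNReal r, Real.toNNReal_pos.mpr hr, fun u hu hu' => ?_⟩
  apply hVsub
  refine ⟨hball ?_, hu⟩
  rw [Metric.mem_ball, NNReal.dist_eq]
  have h2 : (u : ℝ) < (t : ℝ) + r := by
    have := NNReal.coe_lt_coe.mpr hu'
    rwa [NNReal.coe_add, Real.coe_toNNReal r hr.le] at this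
  have h3 : (t : ℝ) ≤ u := hu
  rw [abs_of_nonneg (by linarith)]
  linarith

lemma f_ev_Tminus_le {f : ℝ≥0 → ℝ} {y : ℝ}
    (hrc : ∀ t : ℝ≥0, ContinuousWithinAt f (Set.Ici t) t)
    (h : Tminus f y ≠ ⊤) : f (ev (Tminus f y)) ≤ y := by
  by_contra hgt
  push_neg at hgt
  obtain ⟨δ, hδ, hδprop⟩ := rc_nhds (hrc (ev (Tminus f y))) (Ioi_mem_nhds hgt)
  obtain ⟨t, ht, hlt⟩ := exists_hit_lt (P := fun t => f t < y) h hδ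
  have h1 : ev (Tminus f y) ≤ t := by
    have h1' : Tminus f y ≤ (t : ℝ≥0∞) := hitTime_le (P := fun t => f t < y) ht
    rw [← coe_ev h] at h1'
    exact_mod_cast h1'
  have h2 : t < ev (Tminus f y) + δ := by
    have hlt2 : (t : ℝ≥0∞) < ((ev (Tminus f y) + δ : ℝ≥0) : ℝ≥0∞) := by
      rw [ENNReal.coe_add, coe_ev h]; exact hlt
    exact_mod_cast hlt2
  exact lt_asymm (hδprop t h1 h2) ht

lemma bddAbove_path {f : ℝ≥0 → ℝ} (hbdd : ∀ b : ℝ≥0, ∃ C, ∀ t ≤ b, |f t| ≤ C) (b : ℝ≥0) :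
    BddAbove (f '' Set.Iic b) := by
  obtain ⟨C, hC⟩ := hbdd b
  exact ⟨C, by rintro y ⟨t, ht, rfl⟩; exact (abs_le.mp (hC t ht)).2⟩

lemma le_runMax {f : ℝ≥0 → ℝ} {s b : ℝ≥0} (hb : BddAbove (f '' Set.Iic b)) (h : s ≤ b) :
    f s ≤ runMax f b :=
  le_csSup hb ⟨s, h, rfl⟩

lemma runMax_le {f : ℝ≥0 → ℝ} {b : ℝ≥0} {c : ℝ} (h : ∀ s ≤ b, f s ≤ c) : runMax f b ≤ c :=
  csSup_le ⟨f b, Set.mem_image_of_mem f Set.self_mem_Iic⟩ (by rintro y ⟨t, ht, rfl⟩; exact h t ht)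

lemma drawdown_ev_ge {f : ℝ≥0 → ℝ} {a : ℝ} (ha : 0 < a)
    (hrc : ∀ t : ℝ≥0, ContinuousWithinAt f (Set.Ici t) t)
    (hbdd : ∀ b : ℝ≥0, ∃ C, ∀ t ≤ b, |f t| ≤ C)
    (h : tauD f a ≠ ⊤) : a ≤ drawdown f (ev (tauD f a)) := by
  by_contra hlt
  push_neg at hlt
  set t₀ := ev (tauD f a) with ht₀def
  set Y₀ := drawdown f t₀ with hY₀def
  set η := min ((a - Y₀) / 2) (a / 3) with hηdef
  have hη3 : η ≤ (a - Y₀) / 2 := min_le_left _ _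
  have hη4 : η ≤ a / 3 := min_le_right _ _
  have hη0 : 0 < η := lt_min (by linarith) (by linarith)
  obtain ⟨δ, hδ, hδprop⟩ := rc_nhds (hrc t₀) (Metric.ball_mem_nhds (f t₀) hη0)
  obtain ⟨t, ht, hlt'⟩ := exists_hit_lt (P := fun t => a < drawdown f t) h hδ
  have h1 : t₀ ≤ t := by
    have h1' : tauD f a ≤ (t : ℝ≥0∞) := hitTime_le (P := fun t => a < drawdown f t) ht
    rw [← coe_ev h] at h1'
    exact_mod_cast h1'
  have h2 : t < t₀ + δ := by
    have hlt2 : (t : ℝ≥0∞) < ((t₀ + δ : ℝ≥0) : ℝ≥0∞) := by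
      rw [ENNReal.coe_add, coe_ev h]; exact hlt'
    exact_mod_cast hlt2
  have hball : ∀ u, t₀ ≤ u → u < t₀ + δ → |f u - f t₀| < η := fun u hu hu' => by
    have := hδprop u hu hu'
    rwa [Metric.mem_ball, Real.dist_eq] at this
  have hMt : runMax f t ≤ max (runMax f t₀) (f t₀ + η) := runMax_le fun u hu => by
    rcases le_or_gt u t₀ with h' | h'
    · exact le_max_of_le_left (le_runMax (bddAbove_path hbdd t₀) h')
    · have hb := hball u h'.le (lt_of_le_of_lt hu h2)
      exact le_max_of_le_right (by cases abs_lt.mp hb with | intro hl hr => linarith)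
  have hft : f t₀ - η < f t := by
    have hb := hball t h1 h2
    cases abs_lt.mp hb with | intro hl hr => linarith
  have hY₀' : Y₀ = runMax f t₀ - f t₀ := rfl
  have hdd : drawdown f t < a := by
    have hdd' : drawdown f t = runMax f t - f t := rfl
    rcases max_cases (runMax f t₀) (f t₀ + η) with ⟨he, _⟩ | ⟨he, _⟩ <;> rw [he] at hMt
    · linarith
    · linarith
  exact lt_asymm ht hdd

lemma m3val_nonneg (q s a v : ℝ) (f : ℝ≥0 → ℝ) : 0 ≤ m3val q s a v f := by
  unfold m3val
  split_ifs
  · exact (Real.exp_pos _).le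
  · exact le_rfl

lemma cval_nonneg (q s u v : ℝ) (f : ℝ≥0 → ℝ) : 0 ≤ cval q s u v f := by
  unfold cval
  split_ifs
  · exact (Real.exp_pos _).le
  · exact le_rfl

lemma pointwise_left {f : ℝ≥0 → ℝ} {x a ε q s : ℝ} (ha : 0 < a)
    (hrc : ∀ t : ℝ≥0, ContinuousWithinAt f (Set.Ici t) t)
    (hbdd : ∀ b : ℝ≥0, ∃ C, ∀ t ≤ b, |f t| ≤ C)
    (hf0 : f 0 = x) (hε : 0 < ε) (hεa : ε < a) (hq : 0 ≤ q) (hs : 0 ≤ s) :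
    Real.exp (-s * ε) * cval q s (x - a) (x + ε) f ≤ m3val q s a (x + ε) f := by
  unfold cval
  split_ifs with hC
  · obtain ⟨hTne, hTlt⟩ := hC
    have hτleT : tauD f a ≤ Tminus f (x - a) := by
      apply hitTime_mono
      intro t htf
      have hM : x ≤ runMax f t := hf0 ▸ le_runMax (bddAbove_path hbdd t) zero_le
      simp only [drawdown]
      linarith
    have hτne : tauD f a ≠ ⊤ := by
      intro h'
      rw [h'] at hτleT
      exact hTne (top_le_iff.mp hτleT)
    have hτltT : tauD f a < Tplus f (x + ε) := lt_of_le_of_lt hτleT hTlt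
    have ht01 : ev (tauD f a) ≤ ev (Tminus f (x - a)) := by
      have h' : ((ev (tauD f a) : ℝ≥0) : ℝ≥0∞) ≤ (ev (Tminus f (x - a)) : ℝ≥0) := by
        rw [coe_ev hτne, coe_ev hTne]; exact hτleT
      exact_mod_cast h'
    have hft₁ : f (ev (Tminus f (x - a))) ≤ x - a := f_ev_Tminus_le hrc hTne
    have hM₀ : runMax f (ev (tauD f a)) ≤ x + ε := runMax_le fun u hu => by
      by_contra hgt
      push_neg at hgt
      have h1 : Tplus f (x + ε) ≤ u := hitTime_le (P := fun t => x + ε < f t) hgt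
      have h2 : (u : ℝ≥0∞) ≤ tauD f a := by
        rw [← coe_ev hτne]; exact_mod_cast hu
      exact absurd (lt_of_le_of_lt (h1.trans h2) hτltT) (lt_irrefl _)
    have hM₀x : x ≤ runMax f (ev (tauD f a)) :=
      hf0 ▸ le_runMax (bddAbove_path hbdd _) zero_le
    have hYbound : drawdown f (ev (tauD f a)) - a ≤ ε + (x - a - f (ev (Tminus f (x - a)))) := by
      rcases lt_or_ge (f (ev (tauD f a))) (x - a) with hcase | hcase
      · have hTleτ : Tminus f (x - a) ≤ tauD f a := by
          calc Tminus f (x - a) ≤ ((ev (tauD f a) : ℝ≥0) : ℝ≥0∞) :=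
                hitTime_le (P := fun t => f t < x - a) hcase
            _ = tauD f a := coe_ev hτne
        have heq : ev (Tminus f (x - a)) = ev (tauD f a) := by
          rw [le_antisymm hTleτ hτleT]
        rw [heq]
        simp only [drawdown]
        linarith
      · simp only [drawdown]
        linarith
    unfold m3val
    rw [if_pos ⟨hτne, hτltT⟩, ← Real.exp_add]
    apply Real.exp_le_exp.mpr
    have hq1 : q * (ev (tauD f a) : ℝ) ≤ q * (ev (Tminus f (x - a)) : ℝ) :=
      mul_le_mul_of_nonneg_left (by exact_mod_cast ht01) hq
    have hs1 : s * (drawdown f (ev (tauD f a)) - a) ≤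
        s * ε + s * (x - a - f (ev (Tminus f (x - a)))) := by
      nlinarith [mul_le_mul_of_nonneg_left hYbound hs]
    linarith
  · simpa using m3val_nonneg q s a (x + ε) f

lemma pointwise_right {f : ℝ≥0 → ℝ} {x a ε q s : ℝ} (ha : 0 < a)
    (hrc : ∀ t : ℝ≥0, ContinuousWithinAt f (Set.Ici t) t)
    (hbdd : ∀ b : ℝ≥0, ∃ C, ∀ t ≤ b, |f t| ≤ C)
    (hf0 : f 0 = x) (hε : 0 < ε) (hεa : ε < a) (hq : 0 ≤ q) (hs : 0 ≤ s) :
    m3val q s a (x + ε) f ≤ Real.exp (s * ε) * cval q s (x + ε - a) (x + ε) f := by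
  unfold m3val
  split_ifs with hC
  · obtain ⟨hτne, hτltT⟩ := hC
    have hT'leτ : Tminus f (x + ε - a) ≤ tauD f a := by
      apply ENNReal.le_of_forall_pos_le_add
      intro δ hδ _
      obtain ⟨δ', hδ'0, hδ'le, hδ'T⟩ :
          ∃ δ' : ℝ≥0, 0 < δ' ∧ δ' ≤ δ ∧ tauD f a + δ' ≤ Tplus f (x + ε) := by
        rcases le_or_gt (Tplus f (x + ε)) (tauD f a + δ) with hc | hc
        · have hTne' : Tplus f (x + ε) ≠ ⊤ := by
            intro h'
            rw [h'] at hc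
            exact (ENNReal.add_lt_top.mpr
              ⟨lt_top_iff_ne_top.mpr hτne, ENNReal.coe_lt_top⟩).not_ge hc
          have hκne : Tplus f (x + ε) - tauD f a ≠ ⊤ := ENNReal.sub_ne_top hTne'
          have hκpos : 0 < Tplus f (x + ε) - tauD f a := tsub_pos_of_lt hτltT
          refine ⟨(Tplus f (x + ε) - tauD f a).toNNReal, ?_, ?_, ?_⟩
          · exact ENNReal.toNNReal_pos hκpos.ne' hκne
          · have : ((Tplus f (x + ε) - tauD f a).toNNReal : ℝ≥0∞) ≤ (δ : ℝ≥0∞) := by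
              rw [ENNReal.coe_toNNReal hκne]
              exact tsub_le_iff_left.mpr hc
            exact_mod_cast this
          · rw [ENNReal.coe_toNNReal hκne, add_tsub_cancel_of_le hτltT.le]
        · exact ⟨δ, hδ, le_rfl, hc.le⟩
      obtain ⟨t, ht, hlt'⟩ := exists_hit_lt (P := fun t => a < drawdown f t) hτne hδ'0
      have htT : (t : ℝ≥0∞) < Tplus f (x + ε) := lt_of_lt_of_le hlt' hδ'T
      have hMt : runMax f t ≤ x + ε := runMax_le fun u hu => by
        by_contra hgt
        push_neg at hgt
        have h1 : Tplus f (x + ε) ≤ u := hitTime_le (P := fun t => x + ε < f t) hgt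
        have h2 : (u : ℝ≥0∞) ≤ (t : ℝ≥0∞) := by exact_mod_cast hu
        exact absurd (lt_of_le_of_lt (h1.trans h2) htT) (lt_irrefl _)
      have hft : f t < x + ε - a := by
        have hdd : a < drawdown f t := ht
        simp only [drawdown] at hdd
        linarith
      calc Tminus f (x + ε - a) ≤ (t : ℝ≥0∞) := hitTime_le (P := fun t => f t < x + ε - a) hft
        _ ≤ tauD f a + δ' := hlt'.le
        _ ≤ tauD f a + δ := add_le_add_right (by exact_mod_cast hδ'le) _
    have hT'ne : Tminus f (x + ε - a) ≠ ⊤ := by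
      intro h'
      rw [h'] at hT'leτ
      exact hτne (top_le_iff.mp hT'leτ)
    have hT'ltT : Tminus f (x + ε - a) < Tplus f (x + ε) := lt_of_le_of_lt hT'leτ hτltT
    have ht20 : ev (Tminus f (x + ε - a)) ≤ ev (tauD f a) := by
      have h' : ((ev (Tminus f (x + ε - a)) : ℝ≥0) : ℝ≥0∞) ≤ (ev (tauD f a) : ℝ≥0) := by
        rw [coe_ev hT'ne, coe_ev hτne]; exact hT'leτ
      exact_mod_cast h'
    have hYge : a ≤ drawdown f (ev (tauD f a)) := drawdown_ev_ge ha hrc hbdd hτne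
    have hM₀x : x ≤ runMax f (ev (tauD f a)) :=
      hf0 ▸ le_runMax (bddAbove_path hbdd _) zero_le
    have hYbound : x - a - f (ev (Tminus f (x + ε - a))) ≤ drawdown f (ev (tauD f a)) - a := by
      rcases lt_or_ge (f (ev (Tminus f (x + ε - a)))) (x - a) with hcase | hcase
      · have hMt₂ : x ≤ runMax f (ev (Tminus f (x + ε - a))) :=
          hf0 ▸ le_runMax (bddAbove_path hbdd _) zero_le
        have hdd₂ : a < drawdown f (ev (Tminus f (x + ε - a))) := by
          simp only [drawdown]; linarith
        have hτleT' : tauD f a ≤ Tminus f (x + ε - a) := by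
          calc tauD f a ≤ ((ev (Tminus f (x + ε - a)) : ℝ≥0) : ℝ≥0∞) :=
                hitTime_le (P := fun t => a < drawdown f t) hdd₂
            _ = Tminus f (x + ε - a) := coe_ev hT'ne
        have heq : ev (tauD f a) = ev (Tminus f (x + ε - a)) := by
          rw [le_antisymm hτleT' hT'leτ]
        rw [heq]
        simp only [drawdown]
        linarith
      · linarith
    unfold cval
    rw [if_pos ⟨hT'ne, hT'ltT⟩, ← Real.exp_add]
    apply Real.exp_le_exp.mpr
    have hq1 : q * (ev (Tminus f (x + ε - a)) : ℝ) ≤ q * (ev (tauD f a) : ℝ) :=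
      mul_le_mul_of_nonneg_left (by exact_mod_cast ht20) hq
    have hs1 : s * (x + ε - a - f (ev (Tminus f (x + ε - a)))) ≤
        s * ε + s * (drawdown f (ev (tauD f a)) - a) := by
      nlinarith [mul_le_mul_of_nonneg_left hYbound hs]
    linarith
  · have h0 : (0 : ℝ) ≤ Real.exp (s * ε) * cval q s (x + ε - a) (x + ε) f :=
      mul_nonneg (Real.exp_pos _).le (cval_nonneg _ _ _ _ _)
    simpa using h0

end DDAux

/-- **Corollary 2.3, bounds on the drawdown-time transform.**
`e^{−sε} C^{(q,s)}(x; x−a, x+ε) ≤ E[e^{−q τ_a − s(Y_{τ_a} − a)} 1{τ_a < ∞,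
τ_a < T_{x+ε}^+}] ≤ e^{sε} C^{(q,s)}(x; x+ε−a, x+ε)`. -/
theorem drawdown_transform_bounds
    {Ω : Type*} [MeasurableSpace Ω] (ℙ : Measure Ω) [IsProbabilityMeasure ℙ]
    (X : Ω → ℝ≥0 → ℝ) (x a : ℝ) (ha : 0 < a)
    (hrc : ∀ ω (t : ℝ≥0), ContinuousWithinAt (X ω) (Set.Ici t) t)
    (hbdd : ∀ ω (b : ℝ≥0), ∃ C : ℝ, ∀ t ≤ b, |X ω t| ≤ C)
    (hX0 : ∀ ω, X ω 0 = x)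
    (ε q s : ℝ) (hε : 0 < ε) (hεa : ε < a) (hq : 0 ≤ q) (hs : 0 ≤ s)
    (hintL : Integrable (fun ω => cval q s (x - a) (x + ε) (X ω)) ℙ)
    (hintM : Integrable (fun ω => m3val q s a (x + ε) (X ω)) ℙ)
    (hintR : Integrable (fun ω => cval q s (x + ε - a) (x + ε) (X ω)) ℙ) :
    Real.exp (-s * ε) * (∫ ω, cval q s (x - a) (x + ε) (X ω) ∂ℙ) ≤
      (∫ ω, m3val q s a (x + ε) (X ω) ∂ℙ) ∧
    (∫ ω, m3val q s a (x + ε) (X ω) ∂ℙ) ≤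
      Real.exp (s * ε) * ∫ ω, cval q s (x + ε - a) (x + ε) (X ω) ∂ℙ := by
  constructor
  · have hpt : ∀ ω, Real.exp (-s * ε) * cval q s (x - a) (x + ε) (X ω) ≤
        m3val q s a (x + ε) (X ω) :=
      fun ω => DDAux.pointwise_left ha (hrc ω) (hbdd ω) (hX0 ω) hε hεa hq hs
    calc Real.exp (-s * ε) * ∫ ω, cval q s (x - a) (x + ε) (X ω) ∂ℙ
        = ∫ ω, Real.exp (-s * ε) * cval q s (x - a) (x + ε) (X ω) ∂ℙ :=
          (integral_const_mul _ _).symm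
      _ ≤ ∫ ω, m3val q s a (x + ε) (X ω) ∂ℙ :=
          integral_mono (hintL.const_mul _) hintM hpt
  · have hpt : ∀ ω, m3val q s a (x + ε) (X ω) ≤
        Real.exp (s * ε) * cval q s (x + ε - a) (x + ε) (X ω) :=
      fun ω => DDAux.pointwise_right ha (hrc ω) (hbdd ω) (hX0 ω) hε hεa hq hs
    calc (∫ ω, m3val q s a (x + ε) (X ω) ∂ℙ)
        ≤ ∫ ω, Real.exp (s * ε) * cval q s (x + ε - a) (x + ε) (X ω) ∂ℙ :=
          integral_mono hintM (hintR.const_mul _) hpt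
      _ = Real.exp (s * ε) * ∫ ω, cval q s (x + ε - a) (x + ε) (X ω) ∂ℙ :=
          integral_const_mul _ _
end

section
/- (Uniqueness theorem for the drawdown integral equation (triple LT), Section 3.) There exists exactly one continuous function h : [L,K] → ℝ with h(K) = 0 satisfying h(x) = ∫_x^K e^{−∫_x^y b₁(w) dw} ( c(y) + ∫_{[0, K−y)} h(y+z) β(y, dz) ) dy for all x ∈ [L,K]. -/
open MeasureTheory Set intervalIntegral
open scoped ENNReal NNReal

lemma kernelIntegral_measurable
    (β : ℝ → Measure ℝ) (hfin : ∀ y, IsFiniteMeasure (β y))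
    (hβm : ∀ A : Set ℝ, MeasurableSet A → Measurable (fun y => β y A))
    {F : ℝ → ℝ → ℝ} (hF : Measurable (Function.uncurry F)) :
    Measurable fun y => ∫ z, F y z ∂(β y) := by
  classical
  have hr : Measurable fun y => (β y Set.univ).toReal :=
    (hβm _ MeasurableSet.univ).ennreal_toReal
  set S : ℕ → Set ℝ := fun n =>
    {y | (n : ℝ) ≤ (β y Set.univ).toReal ∧ (β y Set.univ).toReal < n + 1} with hS
  have hSmeas : ∀ n, MeasurableSet (S n) := fun n =>
    (measurableSet_le measurable_const hr).inter (measurableSet_lt hr measurable_const)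
  set κ : ProbabilityTheory.Kernel ℝ ℝ :=
    ⟨β, Measure.measurable_of_measurable_coe β hβm⟩ with hκ
  set κs : ℕ → ProbabilityTheory.Kernel ℝ ℝ := fun n =>
    ⟨fun y => if y ∈ S n then β y else 0, by
      refine Measure.measurable_of_measurable_coe _ fun A hA => ?_
      simp only [apply_ite (fun μ : Measure ℝ => μ A), Measure.coe_zero, Pi.zero_apply]
      exact Measurable.ite (hSmeas n) (hβm A hA) measurable_const⟩ with hκs
  have hκs_apply : ∀ n y, κs n y = if y ∈ S n then β y else 0 := fun n y => rfl
  have hκs_fin : ∀ n, ProbabilityTheory.IsFiniteKernel (κs n) := by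
    intro n
    refine ⟨⟨(n : ℝ≥0∞) + 1, by simp, fun y => ?_⟩⟩
    rw [hκs_apply]
    split_ifs with hy
    · have h1 : β y Set.univ ≠ ∞ := measure_ne_top _ _
      calc β y Set.univ = ENNReal.ofReal (β y Set.univ).toReal :=
            (ENNReal.ofReal_toReal h1).symm
        _ ≤ ENNReal.ofReal ((n : ℝ) + 1) := ENNReal.ofReal_le_ofReal hy.2.le
        _ = (n : ℝ≥0∞) + 1 := by
            rw [ENNReal.ofReal_add (Nat.cast_nonneg n) zero_le_one, ENNReal.ofReal_natCast,
              ENNReal.ofReal_one]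
    · simp
  have hκsum : κ = ProbabilityTheory.Kernel.sum κs := by
    refine ProbabilityTheory.Kernel.ext fun y => Measure.ext fun A hA => ?_
    rw [ProbabilityTheory.Kernel.sum_apply' _ _ hA]
    set n₀ := ⌊(β y Set.univ).toReal⌋₊ with hn₀
    have hmem : y ∈ S n₀ := ⟨Nat.floor_le ENNReal.toReal_nonneg, Nat.lt_floor_add_one _⟩
    rw [tsum_eq_single n₀ ?_]
    · rw [hκs_apply, if_pos hmem]; rfl
    · intro n hn
      rw [hκs_apply]
      rw [if_neg]
      · simp
      · intro hyn
        exact hn ((Nat.floor_eq_iff ENNReal.toReal_nonneg).mpr ⟨hyn.1, hyn.2⟩).symm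
  haveI : ProbabilityTheory.IsSFiniteKernel κ := ⟨⟨κs, hκs_fin, hκsum⟩⟩
  have h := MeasureTheory.StronglyMeasurable.integral_kernel_prod_right
    (κ := κ) hF.stronglyMeasurable
  exact h.measurable

lemma exp_min_integral {A : ℝ} (hA0 : 0 ≤ A) :
    ∫ t in Set.Ioi (0:ℝ), Real.exp (-t) * min t A = 1 - Real.exp (-A) := by
  have hexpint : ∀ a : ℝ, IntegrableOn (fun t => Real.exp (-t)) (Set.Ioi a) := by
    intro a; simpa using exp_neg_integrableOn_Ioi a one_pos
  have hcont : Continuous fun t : ℝ => Real.exp (-t) * min t A :=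
    (Real.continuous_exp.comp continuous_neg).mul (continuous_id.min continuous_const)
  have hint1 : IntegrableOn (fun t => Real.exp (-t) * min t A) (Set.Ioc 0 A) :=
    hcont.integrableOn_Ioc
  have hint2 : IntegrableOn (fun t => Real.exp (-t) * min t A) (Set.Ioi A) := by
    refine Integrable.mono' ((hexpint A).const_mul A) hcont.aestronglyMeasurable ?_
    filter_upwards [ae_restrict_mem measurableSet_Ioi] with t ht
    have h1 : min t A ≤ A := min_le_right _ _
    have h2 : 0 ≤ min t A := le_min (hA0.trans ht.le) hA0
    have h3 : (0:ℝ) < Real.exp (-t) := Real.exp_pos _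
    rw [Real.norm_eq_abs, abs_of_nonneg (by positivity)]
    nlinarith
  have hsplit : Set.Ioi (0:ℝ) = Set.Ioc 0 A ∪ Set.Ioi A := (Set.Ioc_union_Ioi_eq_Ioi hA0).symm
  rw [hsplit, setIntegral_union (Set.Ioc_disjoint_Ioi le_rfl) measurableSet_Ioi hint1 hint2]
  have e1 : ∫ t in Set.Ioc 0 A, Real.exp (-t) * min t A
      = 1 - Real.exp (-A) - A * Real.exp (-A) := by
    have hEq : Set.EqOn (fun t => Real.exp (-t) * min t A) (fun t => Real.exp (-t) * t)
        (Set.Ioc 0 A) := fun t ht => by simp [min_eq_left ht.2]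
    rw [setIntegral_congr_fun measurableSet_Ioc hEq, ← intervalIntegral.integral_of_le hA0]
    have hderiv : ∀ t ∈ Set.uIcc (0:ℝ) A,
        HasDerivAt (fun u => -(u + 1) * Real.exp (-u)) (Real.exp (-t) * t) t := by
      intro t _
      have h1 : HasDerivAt (fun u : ℝ => Real.exp (-u)) (-Real.exp (-t)) t := by
        exact ((hasDerivAt_neg t).exp).congr_deriv (by ring)
      have h2 : HasDerivAt (fun u : ℝ => -(u + 1)) (-1 : ℝ) t := by
        have := ((hasDerivAt_id t).add_const (1:ℝ)).neg; exact this
      have h3 := h2.mul h1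
      exact h3.congr_deriv (by ring)
    rw [intervalIntegral.integral_eq_sub_of_hasDerivAt hderiv
      (((Real.continuous_exp.comp continuous_neg).mul continuous_id).intervalIntegrable _ _)]
    simp [Real.exp_zero]
    ring
  have e2 : ∫ t in Set.Ioi A, Real.exp (-t) * min t A = A * Real.exp (-A) := by
    have hEq : Set.EqOn (fun t => Real.exp (-t) * min t A) (fun t => Real.exp (-t) * A)
        (Set.Ioi A) := fun t ht => by simp [min_eq_right (le_of_lt (Set.mem_Ioi.mp ht))]
    rw [setIntegral_congr_fun measurableSet_Ioi hEq, MeasureTheory.integral_mul_const,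
      integral_exp_neg_Ioi, mul_comm]
  rw [e1, e2]; ring

lemma contraction_key (b : ℝ → ℝ) (hbm : Measurable b) (hbnn : ∀ t, 0 ≤ b t)
    (hbi : Integrable b) {x K : ℝ} (hxK : x ≤ K) :
    ∫ y in x..K, Real.exp (-(∫ w in x..y, b w)) * b y
      ≤ 1 - Real.exp (-(∫ w in x..K, b w)) := by
  have hbint : ∀ a c : ℝ, IntervalIntegrable b volume a c := fun a c => hbi.intervalIntegrable
  set G : ℝ → ℝ := fun y => ∫ w in x..y, b w with hG
  have hGc : Continuous G := intervalIntegral.continuous_primitive hbint x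
  have hGnn : ∀ y, x ≤ y → 0 ≤ G y := fun y hy =>
    intervalIntegral.integral_nonneg hy fun u _ => hbnn u
  set A : ℝ := G K with hA
  have hA0 : 0 ≤ A := hGnn K hxK
  have hexp1 : Real.exp (-A) ≤ 1 := Real.exp_le_one_iff.mpr (neg_nonpos.mpr hA0)
  have hrhs0 : 0 ≤ 1 - Real.exp (-A) := by linarith
  -- the integrand is integrable and nonnegative
  have hmeas : Measurable fun y => Real.exp (-G y) * b y :=
    ((Real.continuous_exp.comp hGc.neg).measurable).mul hbm
  have hIeq : ENNReal.ofReal (∫ y in x..K, Real.exp (-G y) * b y)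
      = ∫⁻ y in Set.Ioc x K, ENNReal.ofReal (Real.exp (-G y) * b y) := by
    rw [intervalIntegral.integral_of_le hxK]
    refine ofReal_integral_eq_lintegral_ofReal ?_ ?_
    · refine Integrable.mono' hbi.integrableOn hmeas.aestronglyMeasurable ?_
      filter_upwards [ae_restrict_mem measurableSet_Ioc] with y hy
      have h1 : Real.exp (-G y) ≤ 1 := Real.exp_le_one_iff.mpr (neg_nonpos.mpr (hGnn y hy.1.le))
      have h2 := hbnn y
      have h3 : (0:ℝ) < Real.exp (-G y) := Real.exp_pos _
      rw [Real.norm_eq_abs, abs_of_nonneg (by positivity)]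
      nlinarith
    · filter_upwards with y using mul_nonneg (Real.exp_nonneg _) (hbnn y)
  set F : ℝ × ℝ → ℝ≥0∞ := fun p =>
    (if G p.1 < p.2 then ENNReal.ofReal (Real.exp (-p.2)) else 0) * ENNReal.ofReal (b p.1)
    with hF
  have hFm : Measurable F := by
    refine Measurable.mul ?_ (ENNReal.measurable_ofReal.comp (hbm.comp measurable_fst))
    refine Measurable.ite ?_ ?_ measurable_const
    · exact measurableSet_lt (hGc.measurable.comp measurable_fst) measurable_snd
    · exact ENNReal.measurable_ofReal.comp
        (Real.continuous_exp.measurable.comp measurable_snd.neg)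
  have hexpI : ∀ a : ℝ, (∫⁻ t in Set.Ioi a, ENNReal.ofReal (Real.exp (-t)))
      = ENNReal.ofReal (Real.exp (-a)) := by
    intro a
    rw [← ofReal_integral_eq_lintegral_ofReal (by have := exp_neg_integrableOn_Ioi a one_pos; simp at this; exact this)
      (by filter_upwards with t using Real.exp_nonneg _), integral_exp_neg_Ioi]
  have hslice : ∀ y ∈ Set.Ioc x K,
      ENNReal.ofReal (Real.exp (-G y) * b y) = ∫⁻ t in Set.Ioi (0:ℝ), F (y, t) := by
    intro y hy
    have hITE : ∀ t : ℝ, (if G y < t then ENNReal.ofReal (Real.exp (-t)) else 0)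
        = (Set.Ioi (G y)).indicator (fun t => ENNReal.ofReal (Real.exp (-t))) t := by
      intro t; simp [Set.indicator_apply, Set.mem_Ioi]
    have h1 : (∫⁻ t in Set.Ioi (0:ℝ), (if G y < t then ENNReal.ofReal (Real.exp (-t)) else 0))
        = ENNReal.ofReal (Real.exp (-G y)) := by
      simp_rw [hITE]
      rw [lintegral_indicator measurableSet_Ioi, Measure.restrict_restrict measurableSet_Ioi,
        Set.inter_eq_self_of_subset_left (Set.Ioi_subset_Ioi (hGnn y hy.1.le)), hexpI]
    calc ENNReal.ofReal (Real.exp (-G y) * b y)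
        = ENNReal.ofReal (Real.exp (-G y)) * ENNReal.ofReal (b y) :=
          ENNReal.ofReal_mul (Real.exp_nonneg _)
      _ = (∫⁻ t in Set.Ioi (0:ℝ), (if G y < t then ENNReal.ofReal (Real.exp (-t)) else 0))
            * ENNReal.ofReal (b y) := by rw [h1]
      _ = ∫⁻ t in Set.Ioi (0:ℝ),
            (if G y < t then ENNReal.ofReal (Real.exp (-t)) else 0) * ENNReal.ofReal (b y) := by
          rw [lintegral_mul_const]
          refine Measurable.ite ?_ ?_ measurable_const
          · exact measurableSet_lt measurable_const measurable_id
          · exact ENNReal.measurable_ofReal.comp (Real.continuous_exp.measurable.comp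
              measurable_neg)
      _ = ∫⁻ t in Set.Ioi (0:ℝ), F (y, t) := rfl
  have hswap : (∫⁻ y in Set.Ioc x K, ENNReal.ofReal (Real.exp (-G y) * b y))
      = ∫⁻ t in Set.Ioi (0:ℝ), ∫⁻ y in Set.Ioc x K, F (y, t) := by
    rw [setLIntegral_congr_fun measurableSet_Ioc
      (fun y hy => hslice y hy)]
    exact lintegral_lintegral_swap hFm.aemeasurable
  have hinner : ∀ t ∈ Set.Ioi (0:ℝ),
      (∫⁻ y in Set.Ioc x K, F (y, t))
        ≤ ENNReal.ofReal (Real.exp (-t)) * ENNReal.ofReal (min t A) := by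
    intro t ht
    have hSm : MeasurableSet {y : ℝ | G y < t} := measurableSet_lt hGc.measurable measurable_const
    have hre : ∀ y : ℝ, F (y, t) = ENNReal.ofReal (Real.exp (-t))
        * ({y : ℝ | G y < t}.indicator (fun y => ENNReal.ofReal (b y)) y) := by
      intro y
      by_cases h : G y < t <;> simp [hF, Set.indicator_apply, h, mul_comm]
    have hbval : ∀ s : ℝ, x ≤ s → (∫⁻ y in Set.Ioc x s, ENNReal.ofReal (b y))
        = ENNReal.ofReal (G s) := by
      intro s hs
      rw [← ofReal_integral_eq_lintegral_ofReal hbi.integrableOn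
        (Filter.Eventually.of_forall fun y => hbnn y)]
      congr 1
      rw [hG]
      exact (intervalIntegral.integral_of_le hs).symm
    have hindle : (∫⁻ y in Set.Ioc x K, {y : ℝ | G y < t}.indicator
        (fun y => ENNReal.ofReal (b y)) y) ≤ ENNReal.ofReal (min t A) := by
      rw [lintegral_indicator hSm, Measure.restrict_restrict hSm]
      rcases min_cases t A with ⟨hmin, hcase⟩ | ⟨hmin, hcase⟩ <;> rw [hmin]
      · -- t ≤ A : use the sup argument
        set S : Set ℝ := Set.Icc x K ∩ G ⁻¹' Set.Iic t with hSdef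
        have hGx : G x = 0 := intervalIntegral.integral_same
        have hSne : S.Nonempty := ⟨x, ⟨Set.left_mem_Icc.mpr hxK, by
          simp only [Set.mem_preimage, Set.mem_Iic, hGx]; exact le_of_lt ht⟩⟩
        have hSc : IsClosed S := isClosed_Icc.inter (isClosed_Iic.preimage hGc)
        have hSb : BddAbove S := (bddAbove_Icc).mono Set.inter_subset_left
        have hs₀ : sSup S ∈ S := hSc.csSup_mem hSne hSb
        have hsub : {y : ℝ | G y < t} ∩ Set.Ioc x K ⊆ Set.Ioc x (sSup S) := by
          rintro y ⟨hy2, hy1⟩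
          exact ⟨hy1.1, le_csSup hSb ⟨⟨hy1.1.le, hy1.2⟩, (Set.mem_preimage.mpr (Set.mem_Iic.mpr (le_of_lt hy2)))⟩⟩
        calc (∫⁻ y in {y : ℝ | G y < t} ∩ Set.Ioc x K, ENNReal.ofReal (b y))
            ≤ ∫⁻ y in Set.Ioc x (sSup S), ENNReal.ofReal (b y) := lintegral_mono_set hsub
          _ = ENNReal.ofReal (G (sSup S)) := hbval _ hs₀.1.1
          _ ≤ ENNReal.ofReal t := ENNReal.ofReal_le_ofReal hs₀.2
      · calc (∫⁻ y in {y : ℝ | G y < t} ∩ Set.Ioc x K, ENNReal.ofReal (b y))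
            ≤ ∫⁻ y in Set.Ioc x K, ENNReal.ofReal (b y) :=
              lintegral_mono_set Set.inter_subset_right
          _ = ENNReal.ofReal A := hbval K hxK
    calc (∫⁻ y in Set.Ioc x K, F (y, t))
        = ENNReal.ofReal (Real.exp (-t)) * ∫⁻ y in Set.Ioc x K,
            {y : ℝ | G y < t}.indicator (fun y => ENNReal.ofReal (b y)) y := by
          simp_rw [hre]
          rw [lintegral_const_mul]
          exact (ENNReal.measurable_ofReal.comp hbm).indicator hSm
      _ ≤ ENNReal.ofReal (Real.exp (-t)) * ENNReal.ofReal (min t A) := by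
          exact mul_le_mul_right hindle _
  have hfinal : (∫⁻ t in Set.Ioi (0:ℝ),
      ENNReal.ofReal (Real.exp (-t)) * ENNReal.ofReal (min t A))
      = ENNReal.ofReal (1 - Real.exp (-A)) := by
    have h1 : ∀ t : ℝ, ENNReal.ofReal (Real.exp (-t)) * ENNReal.ofReal (min t A)
        = ENNReal.ofReal (Real.exp (-t) * min t A) := fun t =>
      (ENNReal.ofReal_mul (Real.exp_nonneg _)).symm
    simp_rw [h1]
    rw [← ofReal_integral_eq_lintegral_ofReal, exp_min_integral hA0]
    · -- integrability
      have hexpint : IntegrableOn (fun t => Real.exp (-t)) (Set.Ioi (0:ℝ)) := by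
        simpa using exp_neg_integrableOn_Ioi 0 one_pos
      refine Integrable.mono' (hexpint.const_mul A)
        (((Real.continuous_exp.comp continuous_neg).mul
          (continuous_id.min continuous_const)).aestronglyMeasurable) ?_
      filter_upwards [ae_restrict_mem measurableSet_Ioi] with t ht
      have h2 : 0 ≤ min t A := le_min ht.le hA0
      have h3 : min t A ≤ A := min_le_right _ _
      have h4 : (0:ℝ) < Real.exp (-t) := Real.exp_pos _
      rw [Real.norm_eq_abs, abs_of_nonneg (by positivity)]
      nlinarith
    · filter_upwards [ae_restrict_mem measurableSet_Ioi] with t ht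
      exact mul_nonneg (Real.exp_nonneg _) (le_min ht.le hA0)
  have hchain : ENNReal.ofReal (∫ y in x..K, Real.exp (-G y) * b y)
      ≤ ENNReal.ofReal (1 - Real.exp (-A)) := by
    rw [hIeq, hswap, ← hfinal]
    refine setLIntegral_mono ?_ hinner
    exact (ENNReal.measurable_ofReal.comp
        (Real.continuous_exp.measurable.comp measurable_neg)).mul
      (ENNReal.measurable_ofReal.comp ((continuous_id.min continuous_const).measurable))
  exact (ENNReal.ofReal_le_ofReal_iff hrhs0).mp hchain

/-- **Uniqueness theorem for the drawdown integral equation (triple LT).**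
Given `L < K`, a nonnegative Borel `b₁` integrable on `[L,K]`, a nonnegative Borel `c`,
and a measurable kernel `β` of finite Borel measures on `[0,∞)` with
`c(y) + β(y,[0,∞)) ≤ b₁(y)` on `[L,K]`, there is exactly one continuous function
`h : [L,K] → ℝ` with `h(K) = 0` satisfying
`h(x) = ∫_x^K e^{−∫_x^y b₁(w) dw} (c(y) + ∫_{[0,K−y)} h(y+z) β(y,dz)) dy`. -/
theorem drawdown_integral_equation_existence_uniqueness
    (L K : ℝ) (hLK : L < K)
    (b₁ c : ℝ → ℝ) (hb₁meas : Measurable b₁) (hcmeas : Measurable c)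
    (hb₁nonneg : ∀ y ∈ Set.Icc L K, 0 ≤ b₁ y)
    (hcnonneg : ∀ y ∈ Set.Icc L K, 0 ≤ c y)
    (hb₁int : IntegrableOn b₁ (Set.Icc L K))
    (β : ℝ → Measure ℝ)
    (hβfin : ∀ y ∈ Set.Icc L K, IsFiniteMeasure (β y))
    (hβmeas : ∀ A : Set ℝ, MeasurableSet A → Measurable (fun y => β y A))
    (hβsupp : ∀ y ∈ Set.Icc L K, β y (Set.Iio 0) = 0)
    (hdom : ∀ y ∈ Set.Icc L K, c y + (β y (Set.Ici 0)).toReal ≤ b₁ y) :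
    ∃ h : ℝ → ℝ,
      (ContinuousOn h (Set.Icc L K) ∧ h K = 0 ∧
        ∀ x ∈ Set.Icc L K,
          h x = ∫ y in x..K, Real.exp (-(∫ w in x..y, b₁ w)) *
            (c y + ∫ z in Set.Ico 0 (K - y), h (y + z) ∂(β y))) ∧
      ∀ g : ℝ → ℝ,
        (ContinuousOn g (Set.Icc L K) ∧ g K = 0 ∧
          ∀ x ∈ Set.Icc L K,
            g x = ∫ y in x..K, Real.exp (-(∫ w in x..y, b₁ w)) *
              (c y + ∫ z in Set.Ico 0 (K - y), g (y + z) ∂(β y))) →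
        ∀ x ∈ Set.Icc L K, g x = h x := by
  classical
  have hLK' : L ≤ K := hLK.le
  set I : Set ℝ := Set.Icc L K with hI
  have hKI : K ∈ I := Set.right_mem_Icc.mpr hLK'
  set b' : ℝ → ℝ := I.indicator b₁ with hb'
  set c' : ℝ → ℝ := I.indicator c with hc'
  set β' : ℝ → Measure ℝ := fun y => if y ∈ I then β y else 0 with hβ'
  have hb'm : Measurable b' := hb₁meas.indicator measurableSet_Icc
  have hb'nn : ∀ t, 0 ≤ b' t := fun t => Set.indicator_nonneg (fun y hy => hb₁nonneg y hy) t
  have hb'i : Integrable b' := hb₁int.integrable_indicator measurableSet_Icc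
  have hc'nn : ∀ t, 0 ≤ c' t := fun t => Set.indicator_nonneg (fun y hy => hcnonneg y hy) t
  have hc'm : Measurable c' := hcmeas.indicator measurableSet_Icc
  have hβ'fin : ∀ y, IsFiniteMeasure (β' y) := by
    intro y
    rw [hβ']; dsimp only
    split_ifs with h
    · exact hβfin y h
    · infer_instance
  have hβ'meas : ∀ A : Set ℝ, MeasurableSet A → Measurable fun y => β' y A := by
    intro A hA
    have h1 : (fun y => β' y A) = fun y => if y ∈ I then β y A else 0 := by
      funext y; rw [hβ']; dsimp only; split_ifs <;> simp
    rw [h1]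
    exact Measurable.ite measurableSet_Icc (hβmeas A hA) measurable_const
  have hβ'le : ∀ y, c' y + (β' y Set.univ).toReal ≤ b' y := by
    intro y
    by_cases h : y ∈ I
    · rw [hb', hc', hβ']; dsimp only
      rw [Set.indicator_of_mem h, Set.indicator_of_mem h, if_pos h]
      refine le_trans ?_ (hdom y h)
      have huniv : β y Set.univ ≤ β y (Set.Ici 0) := by
        calc β y Set.univ = β y (Set.Ici 0 ∪ Set.Iio 0) := by rw [Set.union_comm, Set.Iio_union_Ici]
          _ ≤ β y (Set.Ici 0) + β y (Set.Iio 0) := measure_union_le _ _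
          _ = β y (Set.Ici 0) := by rw [hβsupp y h, add_zero]
      haveI := hβfin y h
      have h2 : (β y Set.univ).toReal ≤ (β y (Set.Ici 0)).toReal :=
        ENNReal.toReal_mono (measure_ne_top _ _) huniv
      linarith
    · rw [hb', hc', hβ']; dsimp only
      rw [Set.indicator_of_notMem h, Set.indicator_of_notMem h, if_neg h]
      simp
  -- the primitive of b'
  set G₀ : ℝ → ℝ := fun t => ∫ w in L..t, b' w with hG₀
  have hG₀c : Continuous G₀ :=
    intervalIntegral.continuous_primitive (fun a b => hb'i.intervalIntegrable) L
  have hsub : ∀ u v : ℝ, (∫ w in u..v, b' w) = G₀ v - G₀ u := fun u v =>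
    (intervalIntegral.integral_interval_sub_left hb'i.intervalIntegrable
      hb'i.intervalIntegrable).symm
  have hintnn : ∀ u v : ℝ, u ≤ v → 0 ≤ ∫ w in u..v, b' w := fun u v huv =>
    intervalIntegral.integral_nonneg huv fun t _ => hb'nn t
  set B : ℝ := ∫ w in L..K, b' w with hB
  have hB0 : 0 ≤ B := hintnn L K hLK'
  set q : ℝ := 1 - Real.exp (-B) with hq
  have hq0 : 0 ≤ q := by
    have h1 : Real.exp (-B) ≤ 1 := Real.exp_le_one_iff.mpr (neg_nonpos.mpr hB0)
    rw [hq]; linarith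
  have hq1 : q < 1 := by have := Real.exp_pos (-B); rw [hq]; linarith
  haveI : CompactSpace I := isCompact_iff_compactSpace.mp isCompact_Icc
  -- extension operator
  set extf : C(I, ℝ) → ℝ → ℝ := fun f t => f (Set.projIcc L K hLK' t) with hextf
  have hextc : ∀ f, Continuous (extf f) := fun f => f.continuous.comp continuous_projIcc
  have hextb : ∀ (f : C(I,ℝ)) (t : ℝ), |extf f t| ≤ ‖f‖ := fun f t => by
    have := f.norm_coe_le_norm (Set.projIcc L K hLK' t)
    rwa [Real.norm_eq_abs] at this
  have hextd : ∀ (f g : C(I,ℝ)) (t : ℝ), |extf f t - extf g t| ≤ dist f g := fun f g t => by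
    have := ContinuousMap.dist_apply_le_dist (f := f) (g := g) (Set.projIcc L K hLK' t)
    rwa [Real.dist_eq] at this
  -- the inner operator
  set Φ : C(I, ℝ) → ℝ → ℝ :=
    fun f y => c' y + ∫ z in Set.Ico 0 (K - y), extf f (y + z) ∂(β' y) with hΦ
  have hΦinner_meas : ∀ (u : ℝ → ℝ), Continuous u →
      Measurable fun y => ∫ z in Set.Ico 0 (K - y), u (y + z) ∂(β' y) := by
    intro u hu
    have h1 : ∀ y : ℝ, (∫ z in Set.Ico 0 (K - y), u (y + z) ∂(β' y))
        = ∫ z, (Set.Ico 0 (K - y)).indicator (fun z => u (y + z)) z ∂(β' y) := fun y =>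
      (MeasureTheory.integral_indicator measurableSet_Ico).symm
    simp_rw [h1]
    refine kernelIntegral_measurable β' hβ'fin hβ'meas ?_
    have h2 : (Function.uncurry fun (y z : ℝ) => (Set.Ico 0 (K - y)).indicator
        (fun z => u (y + z)) z)
        = {p : ℝ × ℝ | 0 ≤ p.2 ∧ p.2 < K - p.1}.indicator (fun p => u (p.1 + p.2)) := by
      funext p
      simp [Function.uncurry, Set.indicator_apply, Set.mem_Ico]
    rw [h2]
    refine Measurable.indicator ?_ ?_
    · exact hu.measurable.comp (measurable_fst.add measurable_snd)
    · exact (measurableSet_le measurable_const measurable_snd).inter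
        (measurableSet_lt measurable_snd (measurable_const.sub measurable_fst))
  have hΦm : ∀ f : C(I,ℝ), Measurable (Φ f) := fun f =>
    hc'm.add (hΦinner_meas (extf f) (hextc f))
  have hinner_bound : ∀ (u : ℝ → ℝ) (M : ℝ) (y : ℝ), (∀ t, |u t| ≤ M) →
      |∫ z in Set.Ico 0 (K - y), u (y + z) ∂(β' y)| ≤ M * (β' y Set.univ).toReal := by
    intro u M y hu
    haveI := hβ'fin y
    have h1 : ‖∫ z in Set.Ico 0 (K - y), u (y + z) ∂(β' y)‖
        ≤ M * (((β' y).restrict (Set.Ico 0 (K - y))) Set.univ).toReal := by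
      refine norm_integral_le_of_norm_le_const ?_
      filter_upwards with z
      rw [Real.norm_eq_abs]; exact hu (y + z)
    rw [Real.norm_eq_abs] at h1
    refine h1.trans ?_
    rw [Measure.restrict_apply_univ]
    have hM : 0 ≤ M := (abs_nonneg (u 0)).trans (hu 0)
    exact mul_le_mul_of_nonneg_left
      (ENNReal.toReal_mono (measure_ne_top _ _) (measure_mono (Set.subset_univ _))) hM
  have hβ'b : ∀ y, (β' y Set.univ).toReal ≤ b' y := fun y => by
    have := hβ'le y; have := hc'nn y; linarith
  have hΦb : ∀ (f : C(I,ℝ)) (y : ℝ), |Φ f y| ≤ (1 + ‖f‖) * b' y := by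
    intro f y
    have h1 := hinner_bound (extf f) ‖f‖ y (hextb f)
    have h2 := hβ'le y
    have h3 := hc'nn y
    have h4 : (0:ℝ) ≤ (β' y Set.univ).toReal := ENNReal.toReal_nonneg
    have h5 : (0:ℝ) ≤ ‖f‖ := norm_nonneg f
    calc |Φ f y| ≤ |c' y| + |∫ z in Set.Ico 0 (K - y), extf f (y + z) ∂(β' y)| := abs_add_le _ _
      _ ≤ c' y + ‖f‖ * (β' y Set.univ).toReal := by rw [abs_of_nonneg h3]; linarith
      _ ≤ (1 + ‖f‖) * b' y := by nlinarith
  have hΦdiff : ∀ (f g : C(I,ℝ)) (y : ℝ), |Φ f y - Φ g y| ≤ dist f g * b' y := by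
    intro f g y
    haveI := hβ'fin y
    have hint : ∀ h : C(I,ℝ), Integrable (fun z => extf h (y + z))
        (((β' y)).restrict (Set.Ico 0 (K - y))) := by
      intro h
      refine Integrable.mono' (integrable_const ‖h‖) ?_ ?_
      · exact ((hextc h).comp (continuous_const.add continuous_id)).aestronglyMeasurable
      · filter_upwards with z; rw [Real.norm_eq_abs]; exact hextb h (y + z)
    have h0 : Φ f y - Φ g y
        = ∫ z in Set.Ico 0 (K - y), (extf f (y + z) - extf g (y + z)) ∂(β' y) := by
      rw [hΦ]; dsimp only; rw [integral_sub (hint f) (hint g)]; ring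
    rw [h0]
    have h1 := hinner_bound (fun t => extf f t - extf g t) (dist f g) y (hextd f g)
    refine h1.trans (mul_le_mul_of_nonneg_left (hβ'b y) dist_nonneg)
  -- the integrand in weighted form
  set Ψ : C(I,ℝ) → ℝ → ℝ := fun f y => Real.exp (-G₀ y) * Φ f y with hΨ
  have hG₀nnI : ∀ y ∈ I, 0 ≤ G₀ y := fun y hy => hintnn L y hy.1
  have hΨbound : ∀ (f : C(I,ℝ)) (y : ℝ), |Ψ f y| ≤ (1 + ‖f‖) * b' y := by
    intro f y
    rw [hΨ]; dsimp only
    rw [abs_mul, abs_of_nonneg (Real.exp_nonneg _)]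
    by_cases hy : y ∈ I
    · have h1 : Real.exp (-G₀ y) ≤ 1 :=
        Real.exp_le_one_iff.mpr (neg_nonpos.mpr (hG₀nnI y hy))
      have h2 := hΦb f y
      have h3 : (0:ℝ) ≤ |Φ f y| := abs_nonneg _
      nlinarith [Real.exp_pos (-G₀ y)]
    · have hb0 : b' y = 0 := Set.indicator_of_notMem hy _
      have hc0 : c' y = 0 := Set.indicator_of_notMem hy _
      have hβ0 : β' y = 0 := if_neg hy
      have hΦ0 : Φ f y = 0 := by rw [hΦ]; dsimp only; rw [hc0, hβ0]; simp
      rw [hΦ0, hb0]; simp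
  have hΨint : ∀ f : C(I,ℝ), Integrable (Ψ f) := by
    intro f
    refine Integrable.mono' (hb'i.const_mul (1 + ‖f‖)) ?_ ?_
    · exact ((Real.continuous_exp.comp hG₀c.neg).measurable.mul (hΦm f)).aestronglyMeasurable
    · filter_upwards with y; rw [Real.norm_eq_abs]; exact hΨbound f y
  -- the operator T
  have hTc : ∀ f : C(I,ℝ), Continuous fun p : I => Real.exp (G₀ ↑p) * ∫ y in (p:ℝ)..K, Ψ f y := by
    intro f
    have h1 : Continuous fun x : ℝ => ∫ y in x..K, Ψ f y := by
      have h2 : (fun x : ℝ => ∫ y in x..K, Ψ f y)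
          = fun x => (∫ y in L..K, Ψ f y) - ∫ y in L..x, Ψ f y := by
        funext x
        exact (intervalIntegral.integral_interval_sub_left (hΨint f).intervalIntegrable
          (hΨint f).intervalIntegrable).symm
      rw [h2]
      exact continuous_const.sub
        (intervalIntegral.continuous_primitive (fun a b => (hΨint f).intervalIntegrable) L)
    exact ((Real.continuous_exp.comp hG₀c).comp continuous_subtype_val).mul
      (h1.comp continuous_subtype_val)
  set T : C(I,ℝ) → C(I,ℝ) :=
    fun f => ⟨fun p => Real.exp (G₀ ↑p) * ∫ y in (p:ℝ)..K, Ψ f y, hTc f⟩ with hT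
  have hTpt : ∀ (f : C(I,ℝ)) (p : I),
      T f p = ∫ y in (p:ℝ)..K, Real.exp (-(∫ w in (p:ℝ)..y, b' w)) * Φ f y := by
    intro f p
    rw [hT]; simp only [ContinuousMap.coe_mk]
    rw [← intervalIntegral.integral_const_mul]
    refine intervalIntegral.integral_congr fun y hy => ?_
    rw [hΨ]; dsimp only
    rw [hsub (p:ℝ) y, ← mul_assoc, ← Real.exp_add]
    congr 2
    ring
  -- contraction estimate
  have hTdist : ∀ f g : C(I,ℝ), dist (T f) (T g) ≤ q * dist f g := by
    intro f g
    rw [ContinuousMap.dist_le (mul_nonneg hq0 dist_nonneg)]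
    rintro ⟨x, hx⟩
    have hxK : x ≤ K := hx.2
    rw [Real.dist_eq, hTpt, hTpt]
    have hii : ∀ h : C(I,ℝ), IntervalIntegrable
        (fun y => Real.exp (-(∫ w in x..y, b' w)) * Φ h y) volume x K := by
      intro h
      refine IntervalIntegrable.mono_fun ((hb'i.const_mul (1 + ‖h‖)).intervalIntegrable) ?_ ?_
      · refine Measurable.aestronglyMeasurable ?_
        refine Measurable.mul ?_ (hΦm h)
        exact (Real.continuous_exp.comp
          (intervalIntegral.continuous_primitive (fun a b => hb'i.intervalIntegrable) x).neg
          ).measurable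
      · filter_upwards [ae_restrict_mem measurableSet_uIoc] with y hy
        rw [Set.uIoc_of_le hxK] at hy
        have hexp1 : Real.exp (-(∫ w in x..y, b' w)) ≤ 1 :=
          Real.exp_le_one_iff.mpr (neg_nonpos.mpr (hintnn x y hy.1.le))
        have h2 := hΦb h y
        have h3 : (0:ℝ) ≤ |Φ h y| := abs_nonneg _
        have h5 : (0:ℝ) ≤ ‖h‖ := norm_nonneg h
        rw [Real.norm_eq_abs, Real.norm_eq_abs, abs_mul, abs_of_nonneg (Real.exp_nonneg _)]
        have hle : Real.exp (-(∫ w in x..y, b' w)) * |Φ h y| ≤ (1 + ‖h‖) * b' y := by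
          nlinarith [Real.exp_pos (-(∫ w in x..y, b' w)), hb'nn y]
        exact hle.trans (le_abs_self _)
    rw [← intervalIntegral.integral_sub (hii f) (hii g)]
    have hg0ii : IntervalIntegrable
        (fun y => dist f g * (Real.exp (-(∫ w in x..y, b' w)) * b' y)) volume x K := by
      refine IntervalIntegrable.mono_fun ((hb'i.const_mul (dist f g)).intervalIntegrable) ?_ ?_
      · refine Measurable.aestronglyMeasurable ?_
        refine Measurable.const_mul (Measurable.mul ?_ hb'm) _
        exact (Real.continuous_exp.comp
          (intervalIntegral.continuous_primitive (fun a b => hb'i.intervalIntegrable) x).neg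
          ).measurable
      · filter_upwards [ae_restrict_mem measurableSet_uIoc] with y hy
        rw [Set.uIoc_of_le hxK] at hy
        have hexp1 : Real.exp (-(∫ w in x..y, b' w)) ≤ 1 :=
          Real.exp_le_one_iff.mpr (neg_nonpos.mpr (hintnn x y hy.1.le))
        have hd0 : (0:ℝ) ≤ dist f g := dist_nonneg
        rw [Real.norm_eq_abs, Real.norm_eq_abs,
          abs_of_nonneg (mul_nonneg hd0 (mul_nonneg (Real.exp_nonneg _) (hb'nn y))),
          abs_of_nonneg (mul_nonneg hd0 (hb'nn y))]
        have hby := hb'nn y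
        nlinarith [mul_nonneg (mul_nonneg hd0 hby)
          (by linarith : (0:ℝ) ≤ 1 - Real.exp (-(∫ w in x..y, b' w)))]
    have hbnd : ‖∫ y in x..K, (Real.exp (-(∫ w in x..y, b' w)) * Φ f y
        - Real.exp (-(∫ w in x..y, b' w)) * Φ g y)‖
        ≤ |∫ y in x..K, dist f g * (Real.exp (-(∫ w in x..y, b' w)) * b' y)| := by
      refine intervalIntegral.norm_integral_le_abs_of_norm_le ?_ hg0ii
      filter_upwards [ae_restrict_mem measurableSet_uIoc] with y hy
      rw [Set.uIoc_of_le hxK] at hy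
      have hd := hΦdiff f g y
      rw [Real.norm_eq_abs, ← mul_sub, abs_mul, abs_of_nonneg (Real.exp_nonneg _)]
      have hexp1 : Real.exp (-(∫ w in x..y, b' w)) ≤ 1 :=
        Real.exp_le_one_iff.mpr (neg_nonpos.mpr (hintnn x y hy.1.le))
      have h3 : (0:ℝ) ≤ |Φ f y - Φ g y| := abs_nonneg _
      have hd0 : (0:ℝ) ≤ dist f g := dist_nonneg
      have hby := hb'nn y
      have hmd : |Φ f y - Φ g y| ≤ dist f g * b' y := hd
      nlinarith [abs_nonneg (Φ f y - Φ g y), Real.exp_pos (-(∫ w in x..y, b' w)),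
        mul_nonneg (mul_nonneg hd0 hby)
          (by linarith : (0:ℝ) ≤ 1 - Real.exp (-(∫ w in x..y, b' w)))]
    rw [Real.norm_eq_abs] at hbnd
    refine hbnd.trans ?_
    rw [intervalIntegral.integral_const_mul]
    have hkey : (∫ y in x..K, Real.exp (-(∫ w in x..y, b' w)) * b' y)
        ≤ 1 - Real.exp (-(∫ w in x..K, b' w)) :=
      contraction_key b' hb'm hb'nn hb'i hxK
    have hkey0 : 0 ≤ ∫ y in x..K, Real.exp (-(∫ w in x..y, b' w)) * b' y :=
      intervalIntegral.integral_nonneg hxK fun y _ =>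
        mul_nonneg (Real.exp_nonneg _) (hb'nn y)
    have hqq : 1 - Real.exp (-(∫ w in x..K, b' w)) ≤ q := by
      have hG0x : 0 ≤ G₀ x := hintnn L x hx.1
      have hBK : G₀ K = B := rfl
      have h1 : (∫ w in x..K, b' w) ≤ B := by rw [hsub x K, hBK]; linarith
      have h2 : Real.exp (-B) ≤ Real.exp (-(∫ w in x..K, b' w)) :=
        Real.exp_le_exp.mpr (by linarith)
      rw [hq]; linarith
    have hd0 : (0:ℝ) ≤ dist f g := dist_nonneg
    rw [abs_of_nonneg (mul_nonneg hd0 hkey0)]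
    calc dist f g * ∫ y in x..K, Real.exp (-(∫ w in x..y, b' w)) * b' y
        ≤ dist f g * q := mul_le_mul_of_nonneg_left (hkey.trans hqq) hd0
      _ = q * dist f g := mul_comm _ _
  -- Banach fixed point
  haveI : Nonempty C(I,ℝ) := ⟨0⟩
  set qn : ℝ≥0 := ⟨q, hq0⟩ with hqn
  have hcontr : ContractingWith qn T := by
    constructor
    · rw [← NNReal.coe_lt_coe]; exact hq1
    · exact LipschitzWith.of_dist_le_mul fun f g => hTdist f g
  set fstar : C(I,ℝ) := ContractingWith.fixedPoint T hcontr with hfstar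
  have hfix : T fstar = fstar := hcontr.fixedPoint_isFixedPt
  -- the candidate solution
  have hvalmem : ∀ (f : C(I,ℝ)) (t : ℝ) (ht : t ∈ I), extf f t = f ⟨t, ht⟩ := by
    intro f t ht
    rw [hextf]; dsimp only; rw [Set.projIcc_of_mem hLK' ht]
  -- key: for any fixed point m and x ∈ I, the statement equation holds for extf m
  have hfixeq : ∀ (m : C(I,ℝ)), T m = m → ∀ x (hx : x ∈ I),
      m ⟨x, hx⟩ = ∫ y in x..K, Real.exp (-(∫ w in x..y, b₁ w)) *
        (c y + ∫ z in Set.Ico 0 (K - y), extf m (y + z) ∂(β y)) := by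
    intro m hm x hx
    have h1 : m ⟨x, hx⟩ = T m ⟨x, hx⟩ := by rw [hm]
    rw [h1, hTpt]
    refine intervalIntegral.integral_congr fun y hy => ?_
    rw [Set.uIcc_of_le hx.2] at hy
    have hyI : y ∈ I := Set.mem_Icc.mpr ⟨hx.1.trans hy.1, hy.2⟩
    have hexpEq : (∫ w in x..y, b' w) = ∫ w in x..y, b₁ w := by
      refine intervalIntegral.integral_congr fun w hw => ?_
      rw [Set.uIcc_of_le hy.1] at hw
      exact Set.indicator_of_mem (Set.mem_Icc.mpr ⟨hx.1.trans hw.1, hw.2.trans hy.2⟩) b₁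
    have hβy : β' y = β y := if_pos hyI
    rw [hexpEq, hΦ]; dsimp only
    rw [hc', hβy, Set.indicator_of_mem hyI c]
  refine ⟨extf fstar, ⟨(hextc fstar).continuousOn, ?_, ?_⟩, ?_⟩
  · -- value at K is 0
    rw [hvalmem fstar K hKI]
    have h1 : fstar ⟨K, hKI⟩ = T fstar ⟨K, hKI⟩ := by rw [hfix]
    rw [h1, hTpt]
    simp
  · -- the integral equation
    intro x hx
    rw [hvalmem fstar x hx]
    exact hfixeq fstar hfix x hx
  · -- uniqueness
    rintro g ⟨hgc, hgK, hgeq⟩ x hx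
    set gm : C(I,ℝ) := ⟨fun p => g ↑p, continuousOn_iff_continuous_restrict.mp hgc⟩ with hgm
    have hgval : ∀ (t : ℝ) (ht : t ∈ I), gm ⟨t, ht⟩ = g t := fun t ht => rfl
    have hgfix : T gm = gm := by
      ext p
      obtain ⟨xp, hxp⟩ := p
      rw [hTpt]
      have hgx : gm ⟨xp, hxp⟩ = g xp := rfl
      rw [hgx, hgeq xp hxp]
      refine (intervalIntegral.integral_congr fun y hy => ?_).symm
      rw [Set.uIcc_of_le hxp.2] at hy
      have hyI : y ∈ I := Set.mem_Icc.mpr ⟨hxp.1.trans hy.1, hy.2⟩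
      have hexpEq : (∫ w in xp..y, b' w) = ∫ w in xp..y, b₁ w := by
        refine intervalIntegral.integral_congr fun w hw => ?_
        rw [Set.uIcc_of_le hy.1] at hw
        exact Set.indicator_of_mem (Set.mem_Icc.mpr ⟨hxp.1.trans hw.1, hw.2.trans hy.2⟩) b₁
      have hβy : β' y = β y := if_pos hyI
      rw [hexpEq, hΦ]; dsimp only
      rw [hc', hβy, Set.indicator_of_mem hyI c]
      congr 2
      refine setIntegral_congr_fun measurableSet_Ico fun z hz => ?_
      have hzI : y + z ∈ I := Set.mem_Icc.mpr ⟨le_trans hyI.1 (le_add_of_nonneg_right hz.1),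
        by have := hz.2; linarith⟩
      exact (hvalmem gm (y + z) hzI).symm
    have huniq : gm = fstar := hcontr.fixedPoint_unique' hgfix hfix
    have h2 : g x = gm ⟨x, hx⟩ := rfl
    rw [h2, huniq, ← hvalmem fstar x hx]
end

section
/- (Contraction estimate for the integral operator; step in the proof of the uniqueness theorem of Section 3.) For a function f : [L,K] → ℝ define (𝓛f)(x) = ∫_x^K e^{−∫_x^y b₁(w) dw} ( c(y) + ∫_{[0, K−y)} f(y+z) β(y, dz) ) dy for x ∈ [L,K]. Then for all continuous f, g : [L,K] → ℝ, sup_{x ∈ [L,K]} |(𝓛f)(x) − (𝓛g)(x)| ≤ (1 − e^{−∫_L^K b₁(w) dw}) · sup_{x ∈ [L,K]} |f(x) − g(x)|. -/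
open MeasureTheory Set intervalIntegral
open ProbabilityTheory

lemma piece_ineq (E0 d : ℝ) (hE0 : 0 ≤ E0) (hE1 : E0 ≤ 1) (hd : 0 ≤ d) :
    E0 * d ≤ (E0 - E0 * Real.exp (-d)) + d ^ 2 := by
  have h1 : 1 - d ≤ Real.exp (-d) := by linarith [Real.add_one_le_exp (-d)]
  have h2 : Real.exp (-d) * (1 + d) ≤ 1 := by
    have := Real.add_one_le_exp d
    have hpos := Real.exp_pos (-d)
    calc Real.exp (-d) * (1 + d) ≤ Real.exp (-d) * Real.exp d := by nlinarith
    _ = 1 := by rw [← Real.exp_add]; simp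
  nlinarith [Real.exp_pos (-d)]

lemma key_ftc (a k : ℝ) (hak : a ≤ k) (b : ℝ → ℝ)
    (hbn : ∀ y ∈ Icc a k, 0 ≤ b y) (hbi : IntegrableOn b (Icc a k)) :
    (∫ y in a..k, b y * Real.exp (-(∫ w in a..y, b w))) ≤
      1 - Real.exp (-(∫ w in a..k, b w)) := by
  set B : ℝ → ℝ := fun y => ∫ w in a..y, b w with hB
  -- basic facts
  have hBcont : ContinuousOn B (Icc a k) := by
    have := intervalIntegral.continuousOn_primitive_interval
      (a := a) (b := k) (f := b) (by rwa [uIcc_of_le hak])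
    rwa [uIcc_of_le hak] at this
  have hii : ∀ s t, s ∈ Icc a k → t ∈ Icc a k → IntervalIntegrable b volume s t := by
    intro s t hs ht
    exact (hbi.mono_set (uIcc_subset_Icc hs ht)).intervalIntegrable
  have hBdiff : ∀ s t, s ∈ Icc a k → t ∈ Icc a k → B t - B s = ∫ w in s..t, b w := by
    intro s t hs ht
    exact intervalIntegral.integral_interval_sub_left (hii a t (left_mem_Icc.2 hak) ht)
      (hii a s (left_mem_Icc.2 hak) hs) ▸ rfl
  have hBmono : ∀ s t, s ∈ Icc a k → t ∈ Icc a k → s ≤ t → B s ≤ B t := by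
    intro s t hs ht hst
    have h0 : 0 ≤ ∫ w in s..t, b w := intervalIntegral.integral_nonneg hst
      (fun u hu => hbn u ⟨hs.1.trans hu.1, hu.2.trans ht.2⟩)
    have := hBdiff s t hs ht
    linarith
  have hBnonneg : ∀ t ∈ Icc a k, 0 ≤ B t := by
    intro t ht
    have := hBmono a t (left_mem_Icc.2 hak) ht ht.1
    simpa [hB] using this
  have hBa : B a = 0 := by simp [hB]
  -- integrability of the integrand
  have hint : IntegrableOn (fun y => b y * Real.exp (-B y)) (Icc a k) := by
    refine Integrable.mono' hbi ?_ ?_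
    · exact (hbi.1.mul ((hBcont.neg.rexp).aestronglyMeasurable measurableSet_Icc))
    · filter_upwards [ae_restrict_mem measurableSet_Icc] with y hy
      have h1 : Real.exp (-B y) ≤ 1 := by
        rw [Real.exp_le_one_iff]; linarith [hBnonneg y hy]
      have h2 := hbn y hy
      rw [Real.norm_eq_abs, abs_mul, abs_of_nonneg h2, abs_of_pos (Real.exp_pos _)]
      nlinarith [Real.exp_pos (-B y)]

  refine le_of_forall_pos_le_add fun ε hε => ?_
  have hBk : 0 ≤ B k := hBnonneg k (right_mem_Icc.2 hak)
  set ε' : ℝ := ε / (B k + 1) with hε'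
  have hε'pos : 0 < ε' := div_pos hε (by linarith)
  -- uniform continuity
  obtain ⟨δ, hδpos, hδ⟩ := Metric.uniformContinuousOn_iff.1
    (isCompact_Icc.uniformContinuousOn_of_continuous hBcont) ε' hε'pos
  obtain ⟨n, hn⟩ := exists_nat_gt ((k - a) / δ)
  have hn0 : 0 < (n : ℝ) := lt_of_le_of_lt (div_nonneg (by linarith) hδpos.le) hn
  have hnn : n ≠ 0 := by exact_mod_cast hn0.ne'
  set h : ℝ := (k - a) / n with hh
  have hhnn : 0 ≤ h := div_nonneg (by linarith) hn0.le
  have hhδ : h < δ := by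
    rw [hh, div_lt_iff₀ hn0]
    calc k - a = ((k-a)/δ) * δ := by field_simp
    _ < n * δ := by exact mul_lt_mul_of_pos_right hn hδpos
    _ = δ * n := by ring
  set t : ℕ → ℝ := fun i => a + i * h with hht
  have ht0 : t 0 = a := by simp [hht]
  have htn : t n = k := by
    simp only [hht, hh]
    field_simp
    ring
  have htmem : ∀ i, i ≤ n → t i ∈ Icc a k := by
    intro i hi
    constructor
    · simp only [hht]; nlinarith [Nat.cast_nonneg (α := ℝ) i]
    · have : (i:ℝ) ≤ n := by exact_mod_cast hi
      have : (i:ℝ) * h ≤ n * h := by nlinarith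
      have hnk : a + n * h = k := by rw [hh]; field_simp; ring
      simp only [hht]; linarith
  have htstep : ∀ i, t (i+1) - t i = h := by
    intro i; simp only [hht]; push_cast; ring
  have htle : ∀ i, t i ≤ t (i+1) := fun i => by linarith [htstep i]
  have hiint : ∀ i < n, IntervalIntegrable (fun y => b y * Real.exp (-B y)) volume (t i) (t (i+1)) := by
    intro i hi
    exact (hint.mono_set (uIcc_subset_Icc (htmem i hi.le) (htmem (i+1) hi))).intervalIntegrable
  have hsum := intervalIntegral.sum_integral_adjacent_intervals hiint
  rw [ht0, htn] at hsum
  rw [← hsum]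
  -- per-piece bound
  have piece : ∀ i < n, (∫ y in t i..t (i+1), b y * Real.exp (-B y)) ≤
      (Real.exp (-B (t i)) - Real.exp (-B (t (i+1)))) + ε' * (B (t (i+1)) - B (t i)) := by
    intro i hi
    have hti := htmem i hi.le
    have hti1 := htmem (i+1) hi
    have hsub : Icc (t i) (t (i+1)) ⊆ Icc a k := Icc_subset_Icc hti.1 hti1.2
    set d : ℝ := B (t (i+1)) - B (t i) with hd
    have hd0 : 0 ≤ d := by have := hBmono _ _ hti hti1 (htle i); linarith
    have hdε : d ≤ ε' := by
      have := hδ (t (i+1)) hti1 (t i) hti (by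
        rw [Real.dist_eq, htstep i, abs_of_nonneg hhnn]; exact hhδ)
      rw [Real.dist_eq] at this
      calc d ≤ |B (t (i+1)) - B (t i)| := le_abs_self _
      _ ≤ ε' := this.le
    have step1 : (∫ y in t i..t (i+1), b y * Real.exp (-B y)) ≤
        ∫ y in t i..t (i+1), b y * Real.exp (-B (t i)) := by
      apply intervalIntegral.integral_mono_on (htle i)
        ((hint.mono_set (by rw [uIcc_of_le (htle i)]; exact hsub)).intervalIntegrable)
        (((hii _ _ hti hti1).mul_const _))
      intro y hy
      have hy' : y ∈ Icc a k := hsub hy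
      have : B (t i) ≤ B y := hBmono _ _ hti hy' hy.1
      have hb0 := hbn y hy'
      have : Real.exp (-B y) ≤ Real.exp (-B (t i)) := Real.exp_le_exp.2 (by linarith)
      nlinarith [Real.exp_pos (-B y)]
    have step2 : (∫ y in t i..t (i+1), b y * Real.exp (-B (t i))) =
        Real.exp (-B (t i)) * d := by
      rw [intervalIntegral.integral_mul_const, hd, hBdiff _ _ hti hti1]
      ring
    have hE1 : Real.exp (-B (t i)) ≤ 1 := by
      rw [Real.exp_le_one_iff]; linarith [hBnonneg _ hti]
    have hexp : Real.exp (-B (t (i+1))) = Real.exp (-B (t i)) * Real.exp (-d) := by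
      rw [← Real.exp_add]; congr 1; rw [hd]; ring
    have step3 := piece_ineq (Real.exp (-B (t i))) d (Real.exp_pos _).le hE1 hd0
    have hd2 : d ^ 2 ≤ ε' * d := by nlinarith
    calc (∫ y in t i..t (i+1), b y * Real.exp (-B y)) ≤ Real.exp (-B (t i)) * d := by
          rw [← step2]; exact step1
    _ ≤ (Real.exp (-B (t i)) - Real.exp (-B (t i)) * Real.exp (-d)) + d ^ 2 := step3
    _ ≤ (Real.exp (-B (t i)) - Real.exp (-B (t (i+1)))) + ε' * d := by
          rw [hexp]; linarith
  calc (∑ i ∈ Finset.range n, ∫ y in t i..t (i+1), b y * Real.exp (-B y))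
      ≤ ∑ i ∈ Finset.range n, ((Real.exp (-B (t i)) - Real.exp (-B (t (i+1)))) + ε' * (B (t (i+1)) - B (t i))) := by
        apply Finset.sum_le_sum; intro i hi; exact piece i (Finset.mem_range.1 hi)
  _ = (Real.exp (-B (t 0)) - Real.exp (-B (t n))) + ε' * (B (t n) - B (t 0)) := by
        rw [Finset.sum_add_distrib]
        congr 1
        · exact Finset.sum_range_sub' (fun i => Real.exp (-B (t i))) n
        · rw [← Finset.mul_sum, Finset.sum_range_sub (fun i => B (t i))]
  _ ≤ 1 - Real.exp (-B k) + ε := by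
        rw [ht0, htn, hBa]
        simp only [neg_zero, Real.exp_zero, sub_zero]
        have : ε' * B k ≤ ε := by
          rw [hε', div_mul_eq_mul_div, div_le_iff₀ (by linarith)]
          nlinarith
        linarith


lemma meas_int_kernel (L K : ℝ) (b₁ : ℝ → ℝ) (hb₁meas : Measurable b₁)
    (β : ℝ → Measure ℝ)
    (hβmeas : ∀ A : Set ℝ, MeasurableSet A → Measurable (fun y => β y A))
    (hbound : ∀ y ∈ Icc L K, β y Set.univ ≤ ENNReal.ofReal (b₁ y))
    (hb₁nonneg : ∀ y ∈ Icc L K, 0 ≤ b₁ y)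
    (f' : ℝ → ℝ) (hf' : Continuous f') :
    ∃ φ : ℝ → ℝ, Measurable φ ∧
      ∀ y ∈ Icc L K, φ y = ∫ z in Ico 0 (K - y), f' (y + z) ∂(β y) := by
  classical
  set S : ℕ → Set ℝ := fun n => Icc L K ∩ b₁ ⁻¹' (Ico (n : ℝ) (n + 1)) with hS
  have hSmeas : ∀ n, MeasurableSet (S n) := fun n =>
    measurableSet_Icc.inter (hb₁meas measurableSet_Ico)
  have hker : ∀ n, Measurable (fun y => (S n).indicator (fun y => β y) y) := by
    intro n
    apply Measure.measurable_of_measurable_coe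
    intro A hA
    have : (fun y => ((S n).indicator (fun y => β y) y) A)
        = (S n).indicator (fun y => β y A) := by
      funext y
      by_cases hy : y ∈ S n <;> simp [Set.indicator_apply, hy]
    rw [this]
    exact Measurable.indicator (hβmeas A hA) (hSmeas n)
  set κs : ℕ → Kernel ℝ ℝ := fun n => ⟨fun y => (S n).indicator (fun y => β y) y, hker n⟩
    with hκs
  have hfin : ∀ n, IsFiniteKernel (κs n) := by
    intro n
    refine ⟨⟨ENNReal.ofReal (n + 1), ENNReal.ofReal_lt_top, fun y => ?_⟩⟩
    show ((S n).indicator (fun y => β y) y) Set.univ ≤ _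
    by_cases hy : y ∈ S n
    · rw [Set.indicator_of_mem hy]
      refine (hbound y hy.1).trans (ENNReal.ofReal_le_ofReal ?_)
      exact (hy.2.2).le
    · rw [Set.indicator_of_notMem hy]; simp
  set κ : Kernel ℝ ℝ := Kernel.sum κs with hκ
  haveI : IsSFiniteKernel κ :=
    by haveI := hfin; exact Kernel.isSFiniteKernel_sum
  have hκeq : ∀ y ∈ Icc L K, κ y = β y := by
    intro y hy
    have hb0 : 0 ≤ b₁ y := hb₁nonneg y hy
    set n₀ : ℕ := ⌊b₁ y⌋₊ with hn₀
    have hyS : ∀ n, y ∈ S n ↔ n = n₀ := by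
      intro n
      constructor
      · rintro ⟨-, h1, h2⟩
        exact (Nat.floor_eq_iff hb0).2 ⟨h1, h2⟩ ▸ rfl
      · rintro rfl
        exact ⟨hy, Nat.floor_le hb0, Nat.lt_floor_add_one (b₁ y)⟩
    ext A hA
    rw [hκ, Kernel.sum_apply, Measure.sum_apply _ hA]
    have : ∀ n, (κs n) y A = if n = n₀ then β y A else 0 := by
      intro n
      show ((S n).indicator (fun y => β y) y) A = _
      by_cases hyn : y ∈ S n
      · rw [Set.indicator_of_mem hyn, if_pos ((hyS n).1 hyn)]
      · rw [Set.indicator_of_notMem hyn, if_neg (fun h => hyn ((hyS n).2 h))]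
        simp
    simp_rw [this]
    rw [tsum_eq_single n₀ (fun n hn => if_neg hn)]
    simp
  set F : ℝ × ℝ → ℝ := fun p =>
    ({p : ℝ × ℝ | 0 ≤ p.2 ∧ p.2 < K - p.1}).indicator (fun p => f' (p.1 + p.2)) p with hF
  have hFmeas : StronglyMeasurable F := by
    apply StronglyMeasurable.indicator
    · exact (hf'.comp (continuous_fst.add continuous_snd)).stronglyMeasurable
    · exact (measurableSet_le measurable_const measurable_snd).inter
        (measurableSet_lt measurable_snd ((measurable_const.sub measurable_fst)))
  refine ⟨fun y => ∫ z, F (y, z) ∂(κ y), (hFmeas.integral_kernel_prod_right').measurable, ?_⟩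
  intro y hy
  show (∫ z, F (y, z) ∂(κ y)) = _
  rw [hκeq y hy]
  have : ∀ z : ℝ, F (y, z) = (Ico 0 (K - y)).indicator (fun z => f' (y + z)) z := by
    intro z
    simp [hF, Set.indicator_apply, mem_Ico, mem_setOf_eq]
  simp_rw [this]
  rw [MeasureTheory.integral_indicator measurableSet_Ico]



noncomputable section

/-- The integral operator `𝓛` of the drawdown integral equation:
`(𝓛 f)(x) = ∫_x^K e^{−∫_x^y b₁(w) dw} (c(y) + ∫_{[0,K−y)} f(y+z) β(y,dz)) dy`. -/
def opL (K : ℝ) (b₁ c : ℝ → ℝ) (β : ℝ → Measure ℝ) (f : ℝ → ℝ) (x : ℝ) : ℝ :=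
  ∫ y in x..K, Real.exp (-(∫ w in x..y, b₁ w)) *
    (c y + ∫ z in Set.Ico 0 (K - y), f (y + z) ∂(β y))

end

/-- **Contraction estimate for the integral operator.**
For continuous `f, g : [L,K] → ℝ`,
`sup_{x ∈ [L,K]} |(𝓛f)(x) − (𝓛g)(x)| ≤ (1 − e^{−∫_L^K b₁}) · sup_{x ∈ [L,K]} |f(x) − g(x)|`. -/
theorem opL_contraction
    (L K : ℝ) (hLK : L < K)
    (b₁ c : ℝ → ℝ) (hb₁meas : Measurable b₁) (hcmeas : Measurable c)
    (hb₁nonneg : ∀ y ∈ Set.Icc L K, 0 ≤ b₁ y)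
    (hcnonneg : ∀ y ∈ Set.Icc L K, 0 ≤ c y)
    (hb₁int : IntegrableOn b₁ (Set.Icc L K))
    (β : ℝ → Measure ℝ)
    (hβfin : ∀ y ∈ Set.Icc L K, IsFiniteMeasure (β y))
    (hβmeas : ∀ A : Set ℝ, MeasurableSet A → Measurable (fun y => β y A))
    (hβsupp : ∀ y ∈ Set.Icc L K, β y (Set.Iio 0) = 0)
    (hdom : ∀ y ∈ Set.Icc L K, c y + (β y (Set.Ici 0)).toReal ≤ b₁ y)
    (f g : ℝ → ℝ) (hf : ContinuousOn f (Set.Icc L K)) (hg : ContinuousOn g (Set.Icc L K)) :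
    (⨆ x : Set.Icc L K, |opL K b₁ c β f x - opL K b₁ c β g x|) ≤
      (1 - Real.exp (-(∫ w in L..K, b₁ w))) * ⨆ x : Set.Icc L K, |f x - g x| := by
  haveI : Nonempty (Icc L K) := (nonempty_Icc.2 hLK.le).to_subtype
  have hLK' : L ≤ K := hLK.le
  have hLmem : L ∈ Icc L K := left_mem_Icc.2 hLK'
  have hKmem : K ∈ Icc L K := right_mem_Icc.2 hLK'
  -- clamp
  set cl : ℝ → ℝ := fun t => max L (min K t) with hcl
  have hclmem : ∀ t, cl t ∈ Icc L K := fun t => ⟨le_max_left _ _, max_le hLK' (min_le_left _ _)⟩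
  have hclid : ∀ t ∈ Icc L K, cl t = t := by
    intro t ht; simp only [hcl]; rw [min_eq_right ht.2, max_eq_right ht.1]
  have hclcont : Continuous cl := continuous_const.max (continuous_const.min continuous_id)
  set f' : ℝ → ℝ := fun t => f (cl t) with hf'
  set g' : ℝ → ℝ := fun t => g (cl t) with hg'
  have hf'cont : Continuous f' := hf.comp_continuous hclcont hclmem
  have hg'cont : Continuous g' := hg.comp_continuous hclcont hclmem
  have hf'eq : ∀ t ∈ Icc L K, f' t = f t := fun t ht => by rw [hf']; simp [hclid t ht]
  have hg'eq : ∀ t ∈ Icc L K, g' t = g t := fun t ht => by rw [hg']; simp [hclid t ht]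
  -- c ≤ b₁ and measure bound
  have hcb : ∀ y ∈ Icc L K, c y ≤ b₁ y := fun y hy =>
    le_trans (le_add_of_nonneg_right ENNReal.toReal_nonneg) (hdom y hy)
  have hβtop : ∀ y ∈ Icc L K, β y (Ici 0) ≠ ⊤ := fun y hy =>
    (@measure_lt_top _ _ (β y) (hβfin y hy) _).ne
  have hbound : ∀ y ∈ Icc L K, β y Set.univ ≤ ENNReal.ofReal (b₁ y) := by
    intro y hy
    have h1 : β y Set.univ ≤ β y (Iio 0) + β y (Ici 0) := by
      rw [← Iio_union_Ici (a := (0:ℝ))]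
      exact measure_union_le _ _
    rw [hβsupp y hy, zero_add] at h1
    refine h1.trans ?_
    rw [← ENNReal.ofReal_toReal (hβtop y hy)]
    exact ENNReal.ofReal_le_ofReal (by linarith [hdom y hy, hcnonneg y hy])
  have hIcoReal : ∀ y ∈ Icc L K, (β y (Ico 0 (K - y))).toReal ≤ b₁ y := by
    intro y hy
    calc (β y (Ico 0 (K - y))).toReal ≤ (β y (Ici 0)).toReal :=
      ENNReal.toReal_mono (hβtop y hy) (measure_mono Ico_subset_Ici_self)
    _ ≤ b₁ y := by linarith [hdom y hy, hcnonneg y hy]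
  -- measurable versions of the inner integrals
  obtain ⟨φf, hφfmeas, hφfeq⟩ := meas_int_kernel L K b₁ hb₁meas β hβmeas hbound hb₁nonneg f' hf'cont
  obtain ⟨φg, hφgmeas, hφgeq⟩ := meas_int_kernel L K b₁ hb₁meas β hβmeas hbound hb₁nonneg g' hg'cont
  set If : ℝ → ℝ := fun y => ∫ z in Ico 0 (K - y), f (y + z) ∂(β y) with hIf
  set Ig : ℝ → ℝ := fun y => ∫ z in Ico 0 (K - y), g (y + z) ∂(β y) with hIg
  have hmemz : ∀ y ∈ Icc L K, ∀ z ∈ Ico 0 (K - y), y + z ∈ Icc L K := by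
    intro y hy z hz
    exact ⟨le_trans hy.1 (by linarith [hz.1]), by linarith [hz.2]⟩
  have hφfeq' : ∀ y ∈ Icc L K, φf y = If y := by
    intro y hy
    rw [hφfeq y hy, hIf]
    exact setIntegral_congr_fun measurableSet_Ico
      (fun z hz => hf'eq _ (hmemz y hy z hz))
  have hφgeq' : ∀ y ∈ Icc L K, φg y = Ig y := by
    intro y hy
    rw [hφgeq y hy, hIg]
    exact setIntegral_congr_fun measurableSet_Ico
      (fun z hz => hg'eq _ (hmemz y hy z hz))
  -- bounds
  obtain ⟨Cf, hCf⟩ := isCompact_Icc.exists_bound_of_continuousOn hf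
  obtain ⟨Cg, hCg⟩ := isCompact_Icc.exists_bound_of_continuousOn hg
  set Cf' : ℝ := max Cf 0 with hCf'
  set Cg' : ℝ := max Cg 0 with hCg'
  have hCf'0 : 0 ≤ Cf' := le_max_right _ _
  have hCg'0 : 0 ≤ Cg' := le_max_right _ _
  set M : ℝ := ⨆ x : Icc L K, |f x - g x| with hM
  have hMbdd : BddAbove (Set.range fun x : Icc L K => |f x - g x|) := by
    refine ⟨Cf' + Cg', ?_⟩
    rintro - ⟨x, rfl⟩
    have h1 := hCf x x.2
    have h2 := hCg x x.2
    rw [Real.norm_eq_abs] at h1 h2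
    calc |f x - g x| ≤ |f x| + |g x| := abs_sub _ _
    _ ≤ Cf' + Cg' := add_le_add (h1.trans (le_max_left _ _)) (h2.trans (le_max_left _ _))
  have hMle : ∀ t ∈ Icc L K, |f t - g t| ≤ M := fun t ht =>
    le_ciSup hMbdd (⟨t, ht⟩ : Icc L K)
  have hM0 : 0 ≤ M := le_trans (abs_nonneg _) (hMle L hLmem)
  -- |If y - Ig y| ≤ M * b₁ y
  have hIfIg : ∀ y ∈ Icc L K, |If y - Ig y| ≤ M * b₁ y := by
    intro y hy
    haveI := hβfin y hy
    set μy : Measure ℝ := (β y).restrict (Ico 0 (K - y)) with hμy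
    haveI : IsFiniteMeasure μy := by rw [hμy]; infer_instance
    have hintf : Integrable (fun z => f (y + z)) μy := by
      refine Integrable.mono' (integrable_const Cf') ?_ ?_
      · have hc : Continuous (fun z : ℝ => f' (y + z)) :=
          hf'cont.comp (continuous_const.add continuous_id)
        refine hc.aestronglyMeasurable.congr ?_
        filter_upwards [ae_restrict_mem measurableSet_Ico] with z hz
        exact hf'eq _ (hmemz y hy z hz)
      · filter_upwards [ae_restrict_mem measurableSet_Ico] with z hz
        rw [Real.norm_eq_abs]
        exact le_trans (by simpa [Real.norm_eq_abs] using hCf _ (hmemz y hy z hz)) (le_max_left _ _)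
    have hintg : Integrable (fun z => g (y + z)) μy := by
      refine Integrable.mono' (integrable_const Cg') ?_ ?_
      · have hc : Continuous (fun z : ℝ => g' (y + z)) :=
          hg'cont.comp (continuous_const.add continuous_id)
        refine hc.aestronglyMeasurable.congr ?_
        filter_upwards [ae_restrict_mem measurableSet_Ico] with z hz
        exact hg'eq _ (hmemz y hy z hz)
      · filter_upwards [ae_restrict_mem measurableSet_Ico] with z hz
        rw [Real.norm_eq_abs]
        exact le_trans (by simpa [Real.norm_eq_abs] using hCg _ (hmemz y hy z hz)) (le_max_left _ _)
    have hsub : If y - Ig y = ∫ z, (f (y + z) - g (y + z)) ∂μy :=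
      (integral_sub hintf hintg).symm
    rw [hsub]
    have h1 : ‖∫ z, (f (y + z) - g (y + z)) ∂μy‖ ≤ M * (μy Set.univ).toReal := by
      refine norm_integral_le_of_norm_le_const ?_
      filter_upwards [ae_restrict_mem measurableSet_Ico] with z hz
      rw [Real.norm_eq_abs]
      exact hMle _ (hmemz y hy z hz)
    rw [Real.norm_eq_abs] at h1
    refine h1.trans ?_
    have : (μy Set.univ).toReal ≤ b₁ y := by
      rw [hμy, Measure.restrict_apply_univ]
      exact hIcoReal y hy
    nlinarith
  -- total mass of b₁
  have hii : ∀ s t, s ∈ Icc L K → t ∈ Icc L K → IntervalIntegrable b₁ volume s t :=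
    fun s t hs ht => (hb₁int.mono_set (uIcc_subset_Icc hs ht)).intervalIntegrable
  set T : ℝ := ∫ w in L..K, b₁ w with hT
  -- main pointwise estimate
  have main : ∀ x ∈ Icc L K, |opL K b₁ c β f x - opL K b₁ c β g x| ≤ (1 - Real.exp (-T)) * M := by
    intro x hx
    have hxK : x ≤ K := hx.2
    set E : ℝ → ℝ := fun y => Real.exp (-(∫ w in x..y, b₁ w)) with hE
    have hIccsub : Icc x K ⊆ Icc L K := Icc_subset_Icc hx.1 le_rfl
    have hEcont : ContinuousOn E (Icc x K) := by
      have h1 : ContinuousOn (fun y => ∫ w in x..y, b₁ w) (Icc x K) := by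
        have := intervalIntegral.continuousOn_primitive_interval
          (a := x) (b := K) (f := b₁)
          (by rw [uIcc_of_le hxK]; exact hb₁int.mono_set hIccsub)
        rwa [uIcc_of_le hxK] at this
      exact (h1.neg).rexp
    have hEpos : ∀ y, 0 < E y := fun y => Real.exp_pos _
    have hEle1 : ∀ y ∈ Icc x K, E y ≤ 1 := by
      intro y hy
      rw [hE, Real.exp_le_one_iff, neg_nonpos]
      exact intervalIntegral.integral_nonneg hy.1
        (fun u hu => hb₁nonneg u (hIccsub ⟨hu.1, hu.2.trans hy.2⟩))
    have hEasm : AEStronglyMeasurable E (volume.restrict (Ioc x K)) :=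
      (hEcont.mono Ioc_subset_Icc_self).aestronglyMeasurable measurableSet_Ioc
    have hIocsub : Ioc x K ⊆ Icc L K := fun y hy => hIccsub (Ioc_subset_Icc_self hy)
    -- integrability of the two full integrands
    have hbint' : IntegrableOn b₁ (Ioc x K) := hb₁int.mono_set hIocsub
    have hIf_asm : AEStronglyMeasurable If (volume.restrict (Ioc x K)) := by
      refine (hφfmeas.aestronglyMeasurable).congr ?_
      filter_upwards [ae_restrict_mem measurableSet_Ioc] with y hy
      exact hφfeq' y (hIocsub hy)
    have hIg_asm : AEStronglyMeasurable Ig (volume.restrict (Ioc x K)) := by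
      refine (hφgmeas.aestronglyMeasurable).congr ?_
      filter_upwards [ae_restrict_mem measurableSet_Ioc] with y hy
      exact hφgeq' y (hIocsub hy)
    have hIfb : ∀ y ∈ Icc L K, |If y| ≤ Cf' * b₁ y := by
      intro y hy
      haveI := hβfin y hy
      haveI : IsFiniteMeasure ((β y).restrict (Ico 0 (K - y))) := by infer_instance
      have h1 : ‖If y‖ ≤ Cf' * ((β y).restrict (Ico 0 (K - y)) Set.univ).toReal := by
        refine norm_integral_le_of_norm_le_const ?_
        filter_upwards [ae_restrict_mem measurableSet_Ico] with z hz
        rw [Real.norm_eq_abs]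
        exact le_trans (by simpa [Real.norm_eq_abs] using hCf _ (hmemz y hy z hz)) (le_max_left _ _)
      rw [Real.norm_eq_abs] at h1
      refine h1.trans ?_
      rw [Measure.restrict_apply_univ]
      nlinarith [hIcoReal y hy, (ENNReal.toReal_nonneg : (0:ℝ) ≤ (β y (Ico 0 (K-y))).toReal)]
    have hIgb : ∀ y ∈ Icc L K, |Ig y| ≤ Cg' * b₁ y := by
      intro y hy
      haveI := hβfin y hy
      haveI : IsFiniteMeasure ((β y).restrict (Ico 0 (K - y))) := by infer_instance
      have h1 : ‖Ig y‖ ≤ Cg' * ((β y).restrict (Ico 0 (K - y)) Set.univ).toReal := by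
        refine norm_integral_le_of_norm_le_const ?_
        filter_upwards [ae_restrict_mem measurableSet_Ico] with z hz
        rw [Real.norm_eq_abs]
        exact le_trans (by simpa [Real.norm_eq_abs] using hCg _ (hmemz y hy z hz)) (le_max_left _ _)
      rw [Real.norm_eq_abs] at h1
      refine h1.trans ?_
      rw [Measure.restrict_apply_univ]
      nlinarith [hIcoReal y hy, (ENNReal.toReal_nonneg : (0:ℝ) ≤ (β y (Ico 0 (K-y))).toReal)]
    have hb₁pos' : ∀ y ∈ Ioc x K, 0 ≤ b₁ y := fun y hy => hb₁nonneg y (hIocsub hy)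
    have hintF : IntervalIntegrable (fun y => E y * (c y + If y)) volume x K := by
      rw [intervalIntegrable_iff_integrableOn_Ioc_of_le hxK]
      refine Integrable.mono' ((hbint'.const_mul (1 + Cf'))) ?_ ?_
      · exact hEasm.mul ((hcmeas.aestronglyMeasurable).add hIf_asm)
      · filter_upwards [ae_restrict_mem measurableSet_Ioc] with y hy
        have h1 := hIfb y (hIocsub hy)
        have h2 := hcb y (hIocsub hy)
        have h3 := hcnonneg y (hIocsub hy)
        have h4 := hEle1 y (Ioc_subset_Icc_self hy)
        have h5 := (hEpos y).le
        have hb0 := hb₁pos' y hy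
        rw [Real.norm_eq_abs, abs_mul, abs_of_nonneg h5]
        have h6 : |c y + If y| ≤ (1 + Cf') * b₁ y := by
          calc |c y + If y| ≤ |c y| + |If y| := abs_add_le _ _
          _ ≤ b₁ y + Cf' * b₁ y := by rw [abs_of_nonneg h3]; exact add_le_add h2 h1
          _ = (1 + Cf') * b₁ y := by ring
        calc E y * |c y + If y| ≤ 1 * ((1 + Cf') * b₁ y) :=
          mul_le_mul h4 h6 (abs_nonneg _) zero_le_one
        _ = (1 + Cf') * b₁ y := by ring
    have hintG : IntervalIntegrable (fun y => E y * (c y + Ig y)) volume x K := by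
      rw [intervalIntegrable_iff_integrableOn_Ioc_of_le hxK]
      refine Integrable.mono' ((hbint'.const_mul (1 + Cg'))) ?_ ?_
      · exact hEasm.mul ((hcmeas.aestronglyMeasurable).add hIg_asm)
      · filter_upwards [ae_restrict_mem measurableSet_Ioc] with y hy
        have h1 := hIgb y (hIocsub hy)
        have h2 := hcb y (hIocsub hy)
        have h3 := hcnonneg y (hIocsub hy)
        have h4 := hEle1 y (Ioc_subset_Icc_self hy)
        have h5 := (hEpos y).le
        have hb0 := hb₁pos' y hy
        rw [Real.norm_eq_abs, abs_mul, abs_of_nonneg h5]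
        have h6 : |c y + Ig y| ≤ (1 + Cg') * b₁ y := by
          calc |c y + Ig y| ≤ |c y| + |Ig y| := abs_add_le _ _
          _ ≤ b₁ y + Cg' * b₁ y := by rw [abs_of_nonneg h3]; exact add_le_add h2 h1
          _ = (1 + Cg') * b₁ y := by ring
        calc E y * |c y + Ig y| ≤ 1 * ((1 + Cg') * b₁ y) :=
          mul_le_mul h4 h6 (abs_nonneg _) zero_le_one
        _ = (1 + Cg') * b₁ y := by ring
    have hintbE : IntervalIntegrable (fun y => b₁ y * E y) volume x K := by
      rw [intervalIntegrable_iff_integrableOn_Ioc_of_le hxK]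
      refine Integrable.mono' hbint' ((hb₁meas.aestronglyMeasurable).mul hEasm) ?_
      filter_upwards [ae_restrict_mem measurableSet_Ioc] with y hy
      have h4 := hEle1 y (Ioc_subset_Icc_self hy)
      have hb0 := hb₁pos' y hy
      rw [Real.norm_eq_abs, abs_mul, abs_of_nonneg hb0, abs_of_nonneg (hEpos y).le]
      nlinarith
    -- difference
    have hdiff : opL K b₁ c β f x - opL K b₁ c β g x =
        ∫ y in x..K, (E y * (c y + If y) - E y * (c y + Ig y)) :=
      (intervalIntegral.integral_sub hintF hintG).symm
    rw [hdiff]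
    have habs : |∫ y in x..K, (E y * (c y + If y) - E y * (c y + Ig y))| ≤
        ∫ y in x..K, M * (b₁ y * E y) := by
      have h1 : ‖∫ y in x..K, (E y * (c y + If y) - E y * (c y + Ig y))‖ ≤
          ∫ y in x..K, ‖E y * (c y + If y) - E y * (c y + Ig y)‖ :=
        intervalIntegral.norm_integral_le_integral_norm hxK
      rw [Real.norm_eq_abs] at h1
      refine h1.trans ?_
      refine intervalIntegral.integral_mono_on hxK ((hintF.sub hintG).norm)
        ((hintbE.const_mul M)) ?_
      intro y hy
      have hyL : y ∈ Icc L K := hIccsub hy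
      have h2 : E y * (c y + If y) - E y * (c y + Ig y) = E y * (If y - Ig y) := by ring
      rw [Real.norm_eq_abs, h2, abs_mul, abs_of_nonneg (hEpos y).le]
      have h3 := hIfIg y hyL
      have h4 := hEle1 y hy
      have h5 := (hEpos y).le
      have hb0 := hb₁nonneg y hyL
      calc E y * |If y - Ig y| ≤ E y * (M * b₁ y) :=
        mul_le_mul_of_nonneg_left h3 h5
      _ = M * (b₁ y * E y) := by ring
    refine habs.trans ?_
    rw [intervalIntegral.integral_const_mul]
    have hkey : (∫ y in x..K, b₁ y * E y) ≤ 1 - Real.exp (-(∫ w in x..K, b₁ w)) :=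
      key_ftc x K hxK b₁ (fun y hy => hb₁nonneg y (hIccsub hy)) (hb₁int.mono_set hIccsub)
    have hxT : (∫ w in x..K, b₁ w) ≤ T := by
      have hadd := intervalIntegral.integral_add_adjacent_intervals
        (hii L x hLmem hx) (hii x K hx hKmem)
      have h0 : 0 ≤ ∫ w in L..x, b₁ w := intervalIntegral.integral_nonneg hx.1
        (fun u hu => hb₁nonneg u ⟨hu.1, hu.2.trans hxK⟩)
      rw [hT]; linarith
    have hexp : Real.exp (-T) ≤ Real.exp (-(∫ w in x..K, b₁ w)) :=
      Real.exp_le_exp.2 (by linarith)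
    have hbE0 : 0 ≤ ∫ y in x..K, b₁ y * E y := by
      refine intervalIntegral.integral_nonneg hxK ?_
      intro u hu
      exact mul_nonneg (hb₁nonneg u (hIccsub hu)) (hEpos u).le
    calc M * ∫ y in x..K, b₁ y * E y ≤ M * (1 - Real.exp (-T)) := by nlinarith
    _ = (1 - Real.exp (-T)) * M := by ring
  refine ciSup_le fun x => ?_
  exact main x x.2
end
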